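/- arXiv:1602.07790 — 10 statements merged into one kernel-verified Lean document; each statement's English description precedes it below -/
import Mathlib

section
/- For every λ ∈ ℂ \ {0}, β ∈ ℂ and all m, n ∈ ℤ, the operators of Ω(λ,β) satisfy: D_m^{λ,β} ∘ D_n^{λ,β} − D_n^{λ,β} ∘ D_m^{λ,β} = (n − m)·D_{m+n}^{λ,β} (the Witt relations), X_m^λ ∘ X_n^λ = X_{m+n}^λ, X_0^λ = id, and D_n^{λ,β} ∘ X_m^λ − X_m^λ ∘ D_n^{λ,β} = m·X_{n+m}^λ. In particular Ω(λ,β) is an (𝒜,𝒱)-module over the centerless Virasoro algebra and the Laurent polynomial algebra. -/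
open Polynomial

noncomputable def shiftOp (m : ℤ) : Module.End ℂ (Polynomial ℂ) :=
  (Polynomial.aeval (Polynomial.X - Polynomial.C (m : ℂ))).toLinearMap

noncomputable def XOp (l : ℂ) (m : ℤ) : Module.End ℂ (Polynomial ℂ) :=
  (l ^ m) • shiftOp m

noncomputable def DOp (l b : ℂ) (m : ℤ) : Module.End ℂ (Polynomial ℂ) :=
  (l ^ m) • ((LinearMap.mulLeft ℂ (Polynomial.X - Polynomial.C (b * (m : ℂ)))) ∘ₗ shiftOp m)

lemma shift_apply (m : ℤ) (f : ℂ[X]) : shiftOp m f = aeval (X - C (m:ℂ)) f := rfl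

lemma aeval_shift_shift (m n : ℤ) (f : ℂ[X]) :
    aeval (X - C (m:ℂ)) (aeval (X - C (n:ℂ)) f) = aeval (X - C (((m+n:ℤ)):ℂ)) f := by
  rw [← aeval_algHom_apply]
  push_cast
  simp [sub_sub]

/-- `Ω(λ,β)` is an `(𝒜,𝒱)`-module: the operators `D_m^{λ,β}` satisfy the Witt
relations, the `X_m^λ` multiply as `X_m ∘ X_n = X_{m+n}` with `X_0 = id`, and
`D_n ∘ X_m − X_m ∘ D_n = m · X_{n+m}`. -/
theorem omega_is_AV_module (l : ℂ) (hl : l ≠ 0) (b : ℂ) (m n : ℤ) :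
    (DOp l b m ∘ₗ DOp l b n - DOp l b n ∘ₗ DOp l b m = ((n - m : ℤ) : ℂ) • DOp l b (m + n)) ∧
    (XOp l m ∘ₗ XOp l n = XOp l (m + n)) ∧
    (XOp l 0 = LinearMap.id) ∧
    (DOp l b n ∘ₗ XOp l m - XOp l m ∘ₗ DOp l b n = (m : ℂ) • XOp l (n + m)) := by
  have hpow : ∀ a c : ℤ, l ^ a * l ^ c = l ^ (a + c) := fun a c => (zpow_add₀ hl a c).symm
  refine ⟨?_, ?_, ?_, ?_⟩
  · refine LinearMap.ext fun f => ?_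
    simp only [DOp, LinearMap.sub_apply, LinearMap.comp_apply, LinearMap.smul_apply,
      LinearMap.mulLeft_apply, map_smul, map_mul, shift_apply, aeval_shift_shift,
      map_sub, aeval_X, aeval_C, smul_smul, hpow, Polynomial.algebraMap_eq]
    rw [add_comm n m]
    set g := aeval (X - C (((m+n:ℤ)):ℂ)) f
    simp only [smul_eq_C_mul]
    push_cast
    simp only [C_mul, C_sub, C_add]
    ring
  · refine LinearMap.ext fun f => ?_
    simp only [XOp, LinearMap.comp_apply, LinearMap.smul_apply, map_smul, shift_apply,
      aeval_shift_shift, smul_smul, hpow]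
    rw [add_comm n m]
  · refine LinearMap.ext fun f => ?_
    simp [XOp, shift_apply]
  · refine LinearMap.ext fun f => ?_
    simp only [DOp, XOp, LinearMap.sub_apply, LinearMap.comp_apply, LinearMap.smul_apply,
      LinearMap.mulLeft_apply, map_smul, map_mul, shift_apply, aeval_shift_shift,
      map_sub, aeval_X, aeval_C, smul_smul, hpow, Polynomial.algebraMap_eq]
    rw [add_comm m n]
    set g := aeval (X - C (((n+m:ℤ)):ℂ)) f
    simp only [smul_eq_C_mul]
    push_cast
    simp only [C_mul, C_sub, C_add]
    ring
end

section
/- Let W be a ℂ-vector space with an (𝒜,𝒱)-structure (d_m), (x_m). Define g(m) = x_{−m} ∘ d_m for m ∈ ℤ. Then for all m, k, n ∈ ℤ: g(m) ∘ g(k) − g(k) ∘ g(m) = −k·g(k) + m·g(m) + (k − m)·g(m+k), and g(m) ∘ x_n − x_n ∘ g(m) = n·x_n. -/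
/-- An `(𝒜,𝒱)`-structure on a ℂ-vector space `W`: families `(d m)`, `(x m)` of ℂ-linear
endomorphisms satisfying the Witt relations, `x_m ∘ x_n = x_{m+n}`, `x_0 = id` and
`d_n ∘ x_m − x_m ∘ d_n = m · x_{n+m}`. -/
structure AVStructure (W : Type*) [AddCommGroup W] [Module ℂ W] where
  d : ℤ → Module.End ℂ W
  x : ℤ → Module.End ℂ W
  witt : ∀ m n : ℤ, d m * d n - d n * d m = ((n - m : ℤ) : ℂ) • d (m + n)
  x_mul : ∀ m n : ℤ, x m * x n = x (m + n)
  x_zero : x 0 = 1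
  dx : ∀ m n : ℤ, d n * x m - x m * d n = (m : ℂ) • x (n + m)

/-- if `g(m) = x_{−m} ∘ d_m`, then
`g(m)g(k) − g(k)g(m) = −k·g(k) + m·g(m) + (k−m)·g(m+k)` and
`g(m)x_n − x_n g(m) = n·x_n`. -/
theorem g_relations {W : Type*} [AddCommGroup W] [Module ℂ W] (S : AVStructure W)
    (g : ℤ → Module.End ℂ W) (hg : ∀ m : ℤ, g m = S.x (-m) * S.d m) (m k n : ℤ) :
    (g m * g k - g k * g m
      = ((-k : ℤ) : ℂ) • g k + (m : ℂ) • g m + ((k - m : ℤ) : ℂ) • g (m + k)) ∧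
    (g m * S.x n - S.x n * g m = (n : ℂ) • S.x n) := by
  have key : ∀ a b : ℤ, S.d a * S.x b = S.x b * S.d a + (b : ℂ) • S.x (a + b) := by
    intro a b
    have h := S.dx b a
    linear_combination (norm := module) h
  have e : ∀ p q : ℤ, g p * g q
      = S.x (-(p+q)) * (S.d p * S.d q) + ((-q : ℤ) : ℂ) • g q := by
    intro p q
    rw [hg p, hg q, mul_assoc, ← mul_assoc (S.d p), key p (-q), add_mul, mul_add,
      smul_mul_assoc, mul_smul_comm,
      mul_assoc (S.x (-q)) (S.d p) (S.d q),
      ← mul_assoc (S.x (-p)) (S.x (-q)) (S.d p * S.d q), S.x_mul (-p) (-q),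
      ← mul_assoc (S.x (-p)) (S.x (p + -q)) (S.d q), S.x_mul (-p) (p + -q)]
    have h2 : -p + -q = -(p+q) := by ring
    have h3 : -p + (p + -q) = -q := by ring
    rw [h2, h3, ← hg q]
  constructor
  · rw [e m k, e k m]
    have h4 : -(k+m) = -(m+k) := by ring
    rw [h4]
    have hw : S.x (-(m+k)) * (S.d m * S.d k) - S.x (-(m+k)) * (S.d k * S.d m)
        = ((k - m : ℤ) : ℂ) • g (m+k) := by
      rw [← mul_sub, S.witt m k, mul_smul_comm, ← hg (m+k)]
    linear_combination (norm := (push_cast; module)) hw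
  · rw [hg m, mul_assoc (S.x (-m)), key m n, mul_add, mul_smul_comm,
      ← mul_assoc (S.x (-m)) (S.x n), ← mul_assoc (S.x n), S.x_mul, S.x_mul]
    have h5 : -m + (m + n) = n := by ring
    have h6 : -m + n = n + -m := by ring
    rw [h5, h6, S.x_mul n (-m)]
    module
end

section
/- Let M be a ℂ-vector space with a 𝒢-action (g(m))_{m∈ℤ} and a family (x_m)_{m∈ℤ} of ℂ-linear endomorphisms with x_m ∘ x_n = x_{m+n}, x_0 = id, and g(m) ∘ x_n − x_n ∘ g(m) = n·x_n for all m, n ∈ ℤ. Define d_m = x_m ∘ g(m). Then d_m ∘ d_k − d_k ∘ d_m = (k − m)·d_{m+k} and d_n ∘ x_m − x_m ∘ d_n = m·x_{n+m} for all m, k, n ∈ ℤ; that is, M becomes an (𝒜,𝒱)-module. -/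
/-- given a `𝒢`-action `(g m)` on `M` together with operators `(x m)` with
`x_m ∘ x_n = x_{m+n}`, `x_0 = id` and `g(m) ∘ x_n − x_n ∘ g(m) = n · x_n`, the operators
`d_m = x_m ∘ g(m)` satisfy the Witt relations and `d_n ∘ x_m − x_m ∘ d_n = m · x_{n+m}`;
that is, `M` becomes an `(𝒜,𝒱)`-module. -/
theorem AV_from_G_action {M : Type*} [AddCommGroup M] [Module ℂ M]
    (g : ℤ → Module.End ℂ M)
    (hg : ∀ m k : ℤ, g m * g k - g k * g m
      = ((-k : ℤ) : ℂ) • g k + (m : ℂ) • g m + ((k - m : ℤ) : ℂ) • g (m + k))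
    (x : ℤ → Module.End ℂ M)
    (hx_mul : ∀ m n : ℤ, x m * x n = x (m + n))
    (hx_zero : x 0 = 1)
    (hgx : ∀ m n : ℤ, g m * x n - x n * g m = (n : ℂ) • x n)
    (d : ℤ → Module.End ℂ M) (hd : ∀ m : ℤ, d m = x m * g m) :
    (∀ m k : ℤ, d m * d k - d k * d m = ((k - m : ℤ) : ℂ) • d (m + k)) ∧
    (∀ m n : ℤ, d n * x m - x m * d n = (m : ℂ) • x (n + m)) := by
  have A : ∀ a b : ℤ, g a * x b = x b * g a + (b : ℂ) • x b :=
    fun a b => by rw [← hgx a b]; abel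
  have key : ∀ a b : ℤ, d a * d b
      = x (a + b) * (g a * g b) + (b : ℂ) • (x (a + b) * g b) := by
    intro a b
    rw [hd, hd, mul_assoc, ← mul_assoc (g a), A, add_mul, mul_add]
    simp only [smul_mul_assoc, mul_smul_comm, ← mul_assoc, hx_mul]
  constructor
  · intro m k
    rw [key, key, add_comm k m, hd]
    have hgmk := hg m k
    have hcomm : x (m + k) * (g m * g k) - x (m + k) * (g k * g m)
        = x (m + k) * (g m * g k - g k * g m) := by rw [mul_sub]
    rw [show x (m + k) * (g m * g k) + (k : ℂ) • (x (m + k) * g k) -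
        (x (m + k) * (g k * g m) + (m : ℂ) • (x (m + k) * g m))
        = x (m + k) * (g m * g k - g k * g m) + (k : ℂ) • (x (m + k) * g k)
          - (m : ℂ) • (x (m + k) * g m) by rw [mul_sub]; abel, hgmk]
    simp only [mul_add, mul_smul_comm]
    push_cast
    module
  · intro n m
    rw [hd, mul_assoc, A, mul_add, ← mul_assoc, hx_mul, mul_smul_comm, hx_mul,
      ← mul_assoc, hx_mul, add_comm m n]
    abel
end

section
/- Let r ∈ ℕ and let (a_0, …, a_r) be 𝓑_r-data on a ℂ-vector space M. Then the operators g(m) = Σ_{i=0}^r (m^{i+1}/(i+1)!)·a_i (m ∈ ℤ) satisfy g(m) ∘ g(k) − g(k) ∘ g(m) = −k·g(k) + m·g(m) + (k − m)·g(m+k) for all m, k ∈ ℤ; that is, (g(m))_{m∈ℤ} is a 𝒢-action on M. -/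
open Finset in
lemma aux1 (N : ℕ) (x y : ℂ) :
    ∑ p ∈ Finset.range (N+1), (p:ℂ) * (N.choose p : ℂ) * x^p * y^(N-p)
      = (N:ℂ) * x * (x+y)^(N-1) := by
  cases N with
  | zero => simp
  | succ n =>
    rw [Finset.sum_range_succ']
    have h : ∀ i ∈ Finset.range (n+1),
        ((i+1:ℕ):ℂ) * ((n+1).choose (i+1) : ℂ) * x^(i+1) * y^(n+1-(i+1))
          = ((n:ℂ)+1) * x * (x^i * y^(n-i) * (n.choose i : ℂ)) := by
      intro i hi
      have hc : (i+1) * ((n+1).choose (i+1)) = (n+1) * n.choose i := by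
        rw [mul_comm, ← Nat.add_one_mul_choose_eq]
      have : (((i+1) * ((n+1).choose (i+1)) : ℕ) : ℂ) = (((n+1) * n.choose i : ℕ) : ℂ) := by
        rw [hc]
      push_cast at this
      have hy : n+1-(i+1) = n-i := by omega
      rw [hy]
      push_cast
      calc ((i:ℂ)+1) * ((n+1).choose (i+1) : ℂ) * x^(i+1) * y^(n-i)
          = (((i:ℂ)+1) * ((n+1).choose (i+1) : ℂ)) * (x^(i+1) * y^(n-i)) := by ring
        _ = (((n:ℂ)+1) * (n.choose i : ℂ)) * (x^(i+1) * y^(n-i)) := by rw [this]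
        _ = ((n:ℂ)+1) * x * (x^i * y^(n-i) * (n.choose i : ℂ)) := by push_cast; ring
    rw [Finset.sum_congr rfl h]
    push_cast
    rw [← Finset.mul_sum, ← add_pow]
    simp

open Finset in
lemma key (n : ℕ) (x y : ℂ) :
    ∑ i ∈ Finset.range (n+1),
      (x^(i+1)/((i+1).factorial : ℂ)) * (y^(n-i+1)/((n-i+1).factorial : ℂ))
        * (((n-i:ℕ):ℂ) - (i:ℂ))
      = -y * (y^(n+1)/((n+1).factorial:ℂ)) + x * (x^(n+1)/((n+1).factorial:ℂ))
        + (y-x) * ((x+y)^(n+1)/((n+1).factorial:ℂ)) := by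
  set G : ℕ → ℂ := fun p =>
    ((n:ℂ)+2 - 2*(p:ℂ)) * ((n+2).choose p : ℂ) * x^p * y^(n+2-p) with hG
  have hstep1 : ∀ i ∈ Finset.range (n+1),
      (x^(i+1)/((i+1).factorial : ℂ)) * (y^(n-i+1)/((n-i+1).factorial : ℂ))
        * (((n-i:ℕ):ℂ) - (i:ℂ))
      = G (i+1) / ((n+2).factorial : ℂ) := by
    intro i hi
    have hi' : i ≤ n := by simpa [Nat.lt_succ_iff] using hi
    have hfac : (n+2).choose (i+1) * (i+1).factorial * (n-i+1).factorial
        = (n+2).factorial := by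
      have h1 : i+1 ≤ n+2 := by omega
      have := Nat.choose_mul_factorial_mul_factorial h1
      have h2 : n+2-(i+1) = n-i+1 := by omega
      rwa [h2] at this
    have hfacC : ((n+2).choose (i+1) : ℂ) * ((i+1).factorial : ℂ)
        * ((n-i+1).factorial : ℂ) = ((n+2).factorial : ℂ) := by
      exact_mod_cast congrArg (Nat.cast : ℕ → ℂ) hfac
    have ha : ((i+1).factorial : ℂ) ≠ 0 := Nat.cast_ne_zero.2 (Nat.factorial_ne_zero _)
    have hb : ((n-i+1).factorial : ℂ) ≠ 0 := Nat.cast_ne_zero.2 (Nat.factorial_ne_zero _)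
    have hc : ((n+2).factorial : ℂ) ≠ 0 := Nat.cast_ne_zero.2 (Nat.factorial_ne_zero _)
    have hcast : ((n-i:ℕ):ℂ) = (n:ℂ) - (i:ℂ) := by
      push_cast [Nat.cast_sub hi']; ring
    have hexp : n+2-(i+1) = n-i+1 := by omega
    rw [hG]
    simp only [hexp, hcast]
    have hCne : (((n+2).choose (i+1)) : ℂ) ≠ 0 :=
      Nat.cast_ne_zero.2 (Nat.choose_pos (by omega)).ne'
    rw [← hfacC]
    push_cast
    field_simp
    ring
  rw [Finset.sum_congr rfl hstep1, ← Finset.sum_div]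
  have hsplit : ∑ p ∈ Finset.range (n+3), G p
      = (∑ i ∈ Finset.range (n+1), G (i+1)) + G 0 + G (n+2) := by
    rw [Finset.sum_range_succ, Finset.sum_range_succ']
  have hF : ∑ p ∈ Finset.range (n+3), G p
      = ((n:ℂ)+2) * (y-x) * (x+y)^(n+1) := by
    have h1 : ∀ p ∈ Finset.range (n+3),
        G p = ((n:ℂ)+2) * (x^p * y^(n+2-p) * ((n+2).choose p : ℂ))
          - 2 * ((p:ℂ) * ((n+2).choose p : ℂ) * x^p * y^(n+2-p)) := by
      intro p _; rw [hG]; ring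
    rw [Finset.sum_congr rfl h1, Finset.sum_sub_distrib, ← Finset.mul_sum,
      ← Finset.mul_sum]
    have h2 := add_pow x y (n+2)
    have h3 := aux1 (n+2) x y
    have e1 : n+2+1 = n+3 := rfl
    have e2 : n+2-1 = n+1 := rfl
    rw [e1] at h2 h3
    rw [e2] at h3
    rw [← h2, h3]
    push_cast
    ring
  have hG0 : G 0 = ((n:ℂ)+2) * y^(n+2) := by simp [hG]
  have hGN : G (n+2) = -(((n:ℂ)+2) * x^(n+2)) := by
    simp [hG]
    ring
  have hmid : ∑ i ∈ Finset.range (n+1), G (i+1)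
      = ((n:ℂ)+2) * (y-x) * (x+y)^(n+1) - ((n:ℂ)+2) * y^(n+2) + ((n:ℂ)+2) * x^(n+2) := by
    have h := hsplit
    rw [hF, hG0, hGN] at h
    linear_combination -h
  rw [hmid]
  have hfs : ((n+2).factorial : ℂ) = ((n:ℂ)+2) * ((n+1).factorial : ℂ) := by
    rw [Nat.factorial_succ]
    push_cast
    ring
  have h1 : ((n+1).factorial : ℂ) ≠ 0 := Nat.cast_ne_zero.2 (Nat.factorial_ne_zero _)
  have h2 : ((n:ℂ)+2) ≠ 0 := by
    have : ((n+2:ℕ):ℂ) ≠ 0 := Nat.cast_ne_zero.2 (by omega)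
    push_cast at this; exact this
  rw [hfs]
  field_simp
  ring



/-- `𝓑_r`-data on a ℂ-vector space `M`: endomorphisms `a_0, …, a_r` with
`a_i a_j − a_j a_i = (j − i)·a_{i+j}` when `i + j ≤ r`, and `a_i a_j = a_j a_i` when
`i + j > r`; equivalently, a module over `𝓑_r = 𝒱₊/𝒱₊^{(r)}`. -/
structure BrData (r : ℕ) (M : Type*) [AddCommGroup M] [Module ℂ M] where
  a : Fin (r + 1) → Module.End ℂ M
  rel : ∀ i j : Fin (r + 1), ∀ h : (i : ℕ) + (j : ℕ) ≤ r,
    a i * a j - a j * a i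
      = (((j : ℕ) : ℂ) - ((i : ℕ) : ℂ)) • a ⟨(i : ℕ) + (j : ℕ), Nat.lt_succ_of_le h⟩
  comm : ∀ i j : Fin (r + 1), r < (i : ℕ) + (j : ℕ) → a i * a j = a j * a i

/-- The operator `g(m) = Σ_{i=0}^r (m^{i+1}/(i+1)!)·a_i`. -/
noncomputable def gOp {r : ℕ} {M : Type*} [AddCommGroup M] [Module ℂ M]
    (B : BrData r M) (m : ℤ) : Module.End ℂ M :=
  ∑ i : Fin (r + 1), (((m : ℂ) ^ ((i : ℕ) + 1)) / (Nat.factorial ((i : ℕ) + 1) : ℂ)) • B.a i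

/-- the operators `g(m)` built from `𝓑_r`-data form a `𝒢`-action:
`g(m)g(k) − g(k)g(m) = −k·g(k) + m·g(m) + (k−m)·g(m+k)`. -/
theorem gOp_is_G_action {r : ℕ} {M : Type*} [AddCommGroup M] [Module ℂ M]
    (B : BrData r M) (m k : ℤ) :
    gOp B m * gOp B k - gOp B k * gOp B m
      = ((-k : ℤ) : ℂ) • gOp B k + (m : ℂ) • gOp B m + ((k - m : ℤ) : ℂ) • gOp B (m + k) := by
  classical
  set N := 2*r+2 with hNdef
  set A : ℕ → Module.End ℂ M := fun n =>
    if h : n ≤ r then B.a ⟨n, Nat.lt_succ_of_le h⟩ else 0 with hA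
  set c : ℤ → ℕ → ℂ := fun u i => ((u:ℂ))^(i+1)/((i+1).factorial : ℂ) with hc
  have hA0 : ∀ n, r < n → A n = 0 := by
    intro n hn; simp only [hA]; rw [dif_neg (by omega)]
  have hbr : ∀ i j : ℕ, A i * A j - A j * A i = ((j:ℂ) - (i:ℂ)) • A (i+j) := by
    intro i j
    by_cases hi : i ≤ r
    · by_cases hj : j ≤ r
      · by_cases hij : i + j ≤ r
        · have h := B.rel ⟨i, Nat.lt_succ_of_le hi⟩ ⟨j, Nat.lt_succ_of_le hj⟩ hij
          simp only [hA]
          rw [dif_pos hi, dif_pos hj, dif_pos hij]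
          exact h
        · have h := B.comm ⟨i, Nat.lt_succ_of_le hi⟩ ⟨j, Nat.lt_succ_of_le hj⟩
            (show r < i + j by omega)
          rw [hA0 (i+j) (by omega), smul_zero]
          simp only [hA]
          rw [dif_pos hi, dif_pos hj, h, sub_self]
      · rw [hA0 j (by omega), hA0 (i+j) (by omega), smul_zero, mul_zero, zero_mul,
          sub_zero]
    · rw [hA0 i (by omega), hA0 (i+j) (by omega), smul_zero, mul_zero, zero_mul,
        zero_sub, neg_zero]
  have hg : ∀ u : ℤ, gOp B u = ∑ i ∈ Finset.range N, c u i • A i := by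
    intro u
    have h1 : gOp B u = ∑ i ∈ Finset.range (r+1), c u i • A i := by
      rw [gOp, ← Fin.sum_univ_eq_sum_range (fun n => c u n • A n)]
      refine Finset.sum_congr rfl fun i _ => ?_
      simp only [hc, hA]
      rw [dif_pos (Nat.lt_succ_iff.mp i.isLt)]
    rw [h1]
    refine Finset.sum_subset (Finset.range_subset_range.2 (by omega)) ?_
    intro x _ hx'
    have : r < x := by simp only [Finset.mem_range] at hx'; omega
    rw [hA0 x this, smul_zero]
  have expand : ∀ u v : ℤ, gOp B u * gOp B v
      = ∑ i ∈ Finset.range N, ∑ j ∈ Finset.range N, (c u i * c v j) • (A i * A j) := by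
    intro u v
    rw [hg u, hg v, Finset.sum_mul_sum]
    exact Finset.sum_congr rfl fun i _ => Finset.sum_congr rfl fun j _ =>
      smul_mul_smul_comm _ _ _ _
  calc gOp B m * gOp B k - gOp B k * gOp B m
      = ∑ i ∈ Finset.range N, ∑ j ∈ Finset.range N,
          ((c m i * c k j) • (A i * A j) - (c m i * c k j) • (A j * A i)) := by
        have e2 : gOp B k * gOp B m
            = ∑ i ∈ Finset.range N, ∑ j ∈ Finset.range N, (c k j * c m i) • (A j * A i) := by
          rw [expand k m]; exact Finset.sum_comm
        rw [expand m k, e2, ← Finset.sum_sub_distrib]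
        refine Finset.sum_congr rfl fun i _ => ?_
        rw [← Finset.sum_sub_distrib]
        refine Finset.sum_congr rfl fun j _ => ?_
        rw [mul_comm (c k j) (c m i)]
    _ = ∑ i ∈ Finset.range N, ∑ j ∈ Finset.range N,
          (c m i * c k j * ((j:ℂ) - (i:ℂ))) • A (i+j) := by
        refine Finset.sum_congr rfl fun i _ => Finset.sum_congr rfl fun j _ => ?_
        rw [← smul_sub, hbr i j, smul_smul]
    _ = ∑ i ∈ Finset.range N, ∑ j ∈ Finset.range (N - i),
          (c m i * c k j * ((j:ℂ) - (i:ℂ))) • A (i+j) := by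
        refine Finset.sum_congr rfl fun i hi => (Finset.sum_subset ?_ ?_).symm
        · exact Finset.range_subset_range.2 (by omega)
        · intro j hj hj'
          simp only [Finset.mem_range] at hi hj hj'
          rw [hA0 (i+j) (by omega), smul_zero]
    _ = ∑ n ∈ Finset.range N, ∑ i ∈ Finset.range (n+1),
          (c m i * c k (n-i) * (((n-i:ℕ):ℂ) - (i:ℂ))) • A (i+(n-i)) :=
        (Finset.sum_range_diag_flip N
          (fun i j => (c m i * c k j * ((j:ℂ) - (i:ℂ))) • A (i+j))).symm
    _ = ∑ n ∈ Finset.range N,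
          (∑ i ∈ Finset.range (n+1), c m i * c k (n-i) * (((n-i:ℕ):ℂ) - (i:ℂ))) • A n := by
        refine Finset.sum_congr rfl fun n _ => ?_
        rw [Finset.sum_smul]
        refine Finset.sum_congr rfl fun i hi => ?_
        simp only [Finset.mem_range, Nat.lt_succ_iff] at hi
        rw [Nat.add_sub_cancel' hi]
    _ = ∑ n ∈ Finset.range N,
          (((-k:ℤ):ℂ) * c k n + (m:ℂ) * c m n + ((k-m:ℤ):ℂ) * c (m+k) n) • A n := by
        refine Finset.sum_congr rfl fun n _ => ?_
        congr 1
        have hk := key n (m:ℂ) (k:ℂ)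
        simp only [hc]
        push_cast
        push_cast at hk
        linear_combination hk
    _ = ((-k : ℤ) : ℂ) • gOp B k + (m : ℂ) • gOp B m + ((k - m : ℤ) : ℂ) • gOp B (m + k) := by
        rw [hg k, hg m, hg (m+k), Finset.smul_sum, Finset.smul_sum, Finset.smul_sum,
          ← Finset.sum_add_distrib, ← Finset.sum_add_distrib]
        refine Finset.sum_congr rfl fun n _ => ?_
        rw [smul_smul, smul_smul, smul_smul, ← add_smul, ← add_smul]
end

section
/- Let M be a ℂ-vector space with a 𝒢-action (g(m))_{m∈ℤ} and let W be a ℂ-vector space with an (𝒜,𝒱)-structure (d_m), (x_m). On the tensor product M ⊗ W define D_m(v ⊗ w) = v ⊗ d_m w + (g(m)v) ⊗ x_m w and X_m(v ⊗ w) = v ⊗ x_m w. Then for all m, n ∈ ℤ: D_m ∘ D_n − D_n ∘ D_m = (n − m)·D_{m+n}, X_m ∘ X_n = X_{m+n}, X_0 = id, and D_n ∘ X_m − X_m ∘ D_n = m·X_{n+m}; that is, these formulas define an (𝒜,𝒱)-module structure F(M, W) on M ⊗ W. -/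
open TensorProduct

/-- given a `𝒢`-action `(g m)` on `M` and an `(𝒜,𝒱)`-structure on `W`, the
operators `D_m(v ⊗ w) = v ⊗ d_m w + g(m)v ⊗ x_m w` and `X_m(v ⊗ w) = v ⊗ x_m w` define an
`(𝒜,𝒱)`-module structure `F(M, W)` on `M ⊗ W`. -/
theorem F_is_AV_module {M W : Type*} [AddCommGroup M] [Module ℂ M]
    [AddCommGroup W] [Module ℂ W]
    (g : ℤ → Module.End ℂ M)
    (hg : ∀ m k : ℤ, g m * g k - g k * g m
      = ((-k : ℤ) : ℂ) • g k + (m : ℂ) • g m + ((k - m : ℤ) : ℂ) • g (m + k))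
    (S : AVStructure W)
    (D X : ℤ → Module.End ℂ (M ⊗[ℂ] W))
    (hD : ∀ m : ℤ, D m = TensorProduct.map LinearMap.id (S.d m) + TensorProduct.map (g m) (S.x m))
    (hX : ∀ m : ℤ, X m = TensorProduct.map LinearMap.id (S.x m)) :
    (∀ m n : ℤ, D m * D n - D n * D m = ((n - m : ℤ) : ℂ) • D (m + n)) ∧
    (∀ m n : ℤ, X m * X n = X (m + n)) ∧
    (X 0 = 1) ∧
    (∀ m n : ℤ, D n * X m - X m * D n = (m : ℂ) • X (n + m)) := by
  have hgp : ∀ (m k : ℤ) (v : M), g m (g k v)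
      = g k (g m v) + ((-k : ℤ) : ℂ) • g k v + (m : ℂ) • g m v
        + ((k - m : ℤ) : ℂ) • g (m + k) v := by
    intro m k v
    have := congrArg (fun f : Module.End ℂ M => f v) (hg m k)
    simp only [LinearMap.sub_apply, LinearMap.add_apply, LinearMap.smul_apply,
      Module.End.mul_apply] at this
    linear_combination (norm := module) this
  have hwp : ∀ (m n : ℤ) (w : W), S.d m (S.d n w)
      = S.d n (S.d m w) + ((n - m : ℤ) : ℂ) • S.d (m + n) w := by
    intro m n w
    have := congrArg (fun f : Module.End ℂ W => f w) (S.witt m n)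
    simp only [LinearMap.sub_apply, LinearMap.smul_apply, Module.End.mul_apply] at this
    linear_combination (norm := module) this
  have hxp : ∀ (m n : ℤ) (w : W), S.x m (S.x n w) = S.x (m + n) w := by
    intro m n w
    have := congrArg (fun f : Module.End ℂ W => f w) (S.x_mul m n)
    simpa using this
  have hdxp : ∀ (m n : ℤ) (w : W), S.d n (S.x m w)
      = S.x m (S.d n w) + (m : ℂ) • S.x (n + m) w := by
    intro m n w
    have := congrArg (fun f : Module.End ℂ W => f w) (S.dx m n)
    simp only [LinearMap.sub_apply, LinearMap.smul_apply, Module.End.mul_apply] at this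
    linear_combination (norm := module) this
  refine ⟨?_, ?_, ?_, ?_⟩
  · intro m n
    ext v w
    simp only [hD, Module.End.mul_apply, LinearMap.sub_apply, LinearMap.add_apply,
      LinearMap.smul_apply, TensorProduct.map_tmul, LinearMap.id_coe, id_eq,
      LinearMap.compr₂_apply, TensorProduct.mk_apply, map_add, TensorProduct.map_tmul,
      TensorProduct.AlgebraTensorModule.curry_apply, TensorProduct.curry_apply,
      LinearMap.coe_restrictScalars]
    rw [hwp m n w, hdxp n m w, hdxp m n w, hgp m n v, hxp m n w, hxp n m w,
      show n + m = m + n by ring]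
    simp only [tmul_add, add_tmul, tmul_smul, ← smul_tmul']
    push_cast
    module
  · intro m n
    ext v w
    simp only [hX, Module.End.mul_apply, TensorProduct.map_tmul, LinearMap.id_coe, id_eq,
      LinearMap.compr₂_apply, TensorProduct.mk_apply, TensorProduct.AlgebraTensorModule.curry_apply,
      TensorProduct.curry_apply, LinearMap.coe_restrictScalars, hxp]
  · ext v w
    simp [hX, S.x_zero]
  · intro m n
    ext v w
    simp only [hD, hX, Module.End.mul_apply, LinearMap.sub_apply, LinearMap.add_apply,
      LinearMap.smul_apply, TensorProduct.map_tmul, LinearMap.id_coe, id_eq,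
      LinearMap.compr₂_apply, TensorProduct.mk_apply, map_add, TensorProduct.AlgebraTensorModule.curry_apply,
      TensorProduct.curry_apply, LinearMap.coe_restrictScalars]
    rw [hdxp m n w, hxp m n w, hxp n m w, show n + m = m + n by ring]
    simp only [tmul_add, add_tmul, tmul_smul, ← smul_tmul']
    module
end

section
/- Let M₁ and M₂ be ℂ-vector spaces with 𝒢-actions (g₁(m)) and (g₂(m)) respectively, and let W be a ℂ-vector space with an (𝒜,𝒱)-structure (d_m), (x_m). Equip M₁ ⊗ M₂ with the 𝒢-action g(m)(v₁ ⊗ v₂) = (g₁(m)v₁) ⊗ v₂ + v₁ ⊗ (g₂(m)v₂). Then the canonical associativity isomorphism α : M₁ ⊗ (M₂ ⊗ W) → (M₁ ⊗ M₂) ⊗ W intertwines the operators of F(M₁, F(M₂, W)) with those of F(M₁ ⊗ M₂, W): for every m ∈ ℤ, α ∘ D_m^{F(M₁,F(M₂,W))} = D_m^{F(M₁⊗M₂,W)} ∘ α and α ∘ X_m^{F(M₁,F(M₂,W))} = X_m^{F(M₁⊗M₂,W)} ∘ α. Hence F(M₁, F(M₂, W)) ≅ F(M₁ ⊗ M₂,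 W) as (𝒜,𝒱)-modules. -/
open TensorProduct

/-- the associativity isomorphism `α : M₁ ⊗ (M₂ ⊗ W) → (M₁ ⊗ M₂) ⊗ W`
intertwines the operators of `F(M₁, F(M₂, W))` with those of `F(M₁ ⊗ M₂, W)`, where
`M₁ ⊗ M₂` carries the `𝒢`-action `g(m)(v₁ ⊗ v₂) = g₁(m)v₁ ⊗ v₂ + v₁ ⊗ g₂(m)v₂`;
hence `F(M₁, F(M₂, W)) ≅ F(M₁ ⊗ M₂, W)` as `(𝒜,𝒱)`-modules. -/
theorem F_F_iso_F_tensor {M₁ M₂ W : Type*}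
    [AddCommGroup M₁] [Module ℂ M₁] [AddCommGroup M₂] [Module ℂ M₂]
    [AddCommGroup W] [Module ℂ W]
    (g₁ : ℤ → Module.End ℂ M₁)
    (hg₁ : ∀ m k : ℤ, g₁ m * g₁ k - g₁ k * g₁ m
      = ((-k : ℤ) : ℂ) • g₁ k + (m : ℂ) • g₁ m + ((k - m : ℤ) : ℂ) • g₁ (m + k))
    (g₂ : ℤ → Module.End ℂ M₂)
    (hg₂ : ∀ m k : ℤ, g₂ m * g₂ k - g₂ k * g₂ m
      = ((-k : ℤ) : ℂ) • g₂ k + (m : ℂ) • g₂ m + ((k - m : ℤ) : ℂ) • g₂ (m + k))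
    (S : AVStructure W)
    -- the `𝒢`-action on `M₁ ⊗ M₂`
    (g : ℤ → Module.End ℂ (M₁ ⊗[ℂ] M₂))
    (hgdef : ∀ m : ℤ, g m
      = TensorProduct.map (g₁ m) LinearMap.id + TensorProduct.map LinearMap.id (g₂ m))
    -- the operators of the inner module `F(M₂, W)`
    (Din Xin : ℤ → Module.End ℂ (M₂ ⊗[ℂ] W))
    (hDin : ∀ m : ℤ, Din m
      = TensorProduct.map LinearMap.id (S.d m) + TensorProduct.map (g₂ m) (S.x m))
    (hXin : ∀ m : ℤ, Xin m = TensorProduct.map LinearMap.id (S.x m))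
    -- the operators of `F(M₁, F(M₂, W))`
    (Dout Xout : ℤ → Module.End ℂ (M₁ ⊗[ℂ] (M₂ ⊗[ℂ] W)))
    (hDout : ∀ m : ℤ, Dout m
      = TensorProduct.map LinearMap.id (Din m) + TensorProduct.map (g₁ m) (Xin m))
    (hXout : ∀ m : ℤ, Xout m = TensorProduct.map LinearMap.id (Xin m))
    -- the operators of `F(M₁ ⊗ M₂, W)`
    (DT XT : ℤ → Module.End ℂ ((M₁ ⊗[ℂ] M₂) ⊗[ℂ] W))
    (hDT : ∀ m : ℤ, DT m
      = TensorProduct.map LinearMap.id (S.d m) + TensorProduct.map (g m) (S.x m))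
    (hXT : ∀ m : ℤ, XT m = TensorProduct.map LinearMap.id (S.x m)) :
    ∀ m : ℤ,
      ((TensorProduct.assoc ℂ M₁ M₂ W).symm.toLinearMap ∘ₗ Dout m
        = DT m ∘ₗ (TensorProduct.assoc ℂ M₁ M₂ W).symm.toLinearMap) ∧
      ((TensorProduct.assoc ℂ M₁ M₂ W).symm.toLinearMap ∘ₗ Xout m
        = XT m ∘ₗ (TensorProduct.assoc ℂ M₁ M₂ W).symm.toLinearMap) := by
  intro m
  constructor <;>
  · ext v₁ v₂ w
    simp [hDout, hXout, hDin, hXin, hDT, hXT, hgdef, tmul_add, add_tmul]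
    try abel
end

section
/- Let r ∈ ℕ, let (a_0, …, a_r) be irreducible 𝓑_r-data on a ℂ-vector space M that is infinite-dimensional over ℂ, and let λ ∈ ℂ \ {0}, β ∈ ℂ. Then F(M, Ω(λ,β)) is irreducible: every ℂ-subspace N of M ⊗ ℂ[t] that is invariant under D_m for every m ∈ ℤ satisfies N = 0 or N = M ⊗ ℂ[t]. -/
open Polynomial TensorProduct

/-- The operator `D_m` of the Virasoro module `F(M, Ω(λ,β)) = M ⊗ ℂ[t]`:
`D_m(v ⊗ f) = v ⊗ λ^m(t − βm)f(t − m) + g(m)v ⊗ λ^m f(t − m)`. -/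
noncomputable def DF {r : ℕ} {M : Type*} [AddCommGroup M] [Module ℂ M]
    (B : BrData r M) (l b : ℂ) (m : ℤ) : Module.End ℂ (M ⊗[ℂ] Polynomial ℂ) :=
  TensorProduct.map LinearMap.id (DOp l b m) + TensorProduct.map (gOp B m) (XOp l m)

/-!
Dividing `D_m` by `λ ^ m` and expanding `f (t - m) = ∑ⱼ (-m) ^ j (∂⁽ʲ⁾ f) (t)` in Hasse
derivatives writes `λ⁻ᵐ D_m` as a polynomial in `m` whose coefficients `coeffOp k` do not depend
on `m`, so by a Vandermonde argument every invariant subspace `N` is invariant under each of them.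

Let `d` be the least `t`-degree of a nonzero element of `N`. For `k ≥ 1`, `coeffOp k` does not
raise the `t`-degree and acts on top coefficients as `a_{k-1}` up to scalars, so the top
coefficients of the elements of `N` of degree `≤ d` form a nonzero `a`-invariant subspace, hence
all of `M`; by minimality they determine the element. If `d = 0`, `N` contains `M ⊗ 1` and is
stable under `coeffOp 0 = t ·`, so it is everything. If `d > 0`, the coefficients of `t ^ (d - 1)`
in the resulting section `M → N` obey commutator relations `[a_{k+1}, T] ∝ a_k` which, by downward
induction from `a_{r+1} = 0`, force `a_i = 0` for `i ≥ 1` and `a_0 = β + (d - 1) / 2`. Then every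
line of `M` is invariant, and `M` would be finite-dimensional.
-/

open Filter Finset

section PolyExpansion

variable {K V : Type*} [Field K] [AddCommGroup V] [Module K V]

def HasPolyExpansion (E : ℤ → Module.End K V) (c : ℕ → Module.End K V) : Prop :=
  ∀ u, ∀ᶠ n in atTop, ∀ m : ℤ, E m u = ∑ k ∈ range n, (m : K) ^ k • c k u

theorem mem_of_forall_sum_pow_smul_mem [CharZero K] (N : Submodule K V) {n : ℕ} {w : ℕ → V}
    (h : ∀ m : ℤ, ∑ k ∈ range n, (m : K) ^ k • w k ∈ N) {k : ℕ} (hk : k < n) : w k ∈ N := by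
  rw [← Submodule.Quotient.mk_eq_zero, ← Module.forall_dual_apply_eq_zero_iff K]
  intro φ
  -- against `φ`, the hypothesis says that a polynomial vanishes on all of `ℤ`
  set p : K[X] := ∑ j ∈ range n, C (φ (N.mkQ (w j))) * X ^ j
  have hroot : ∀ m : ℤ, p.IsRoot (m : K) := fun m => by
    have h0 : (φ ∘ₗ N.mkQ) (∑ k ∈ range n, (m : K) ^ k • w k) = 0 := by
      rw [LinearMap.comp_apply, Submodule.mkQ_apply, (Submodule.Quotient.mk_eq_zero N).2 (h m),
        map_zero]
    simp only [map_sum, map_smul, LinearMap.comp_apply, smul_eq_mul] at h0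
    simp only [p, IsRoot.def, eval_finsetSum, eval_mul, eval_C, eval_pow, eval_X, ← h0]
    exact sum_congr rfl fun j _ => mul_comm _ _
  have hp : p = 0 := eq_zero_of_infinite_isRoot p <|
    (Set.infinite_range_of_injective Int.cast_injective).mono (by rintro _ ⟨m, rfl⟩; exact hroot m)
  simpa [p, finsetSum_coeff, coeff_C_mul_X_pow, hk] using congrArg (coeff · k) hp

theorem HasPolyExpansion.eventually_apply_eq_zero {E : ℤ → Module.End K V} {c : ℕ → Module.End K V}
    (h : HasPolyExpansion E c) (u : V) : ∀ᶠ k in atTop, c k u = 0 := by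
  obtain ⟨n, hn⟩ := eventually_atTop.1 (h u)
  refine eventually_atTop.2 ⟨n, fun k hk => ?_⟩
  simpa [sum_range_succ] using ((hn (k + 1) (by omega) 1).symm.trans (hn k hk 1))

theorem HasPolyExpansion.apply_mem [CharZero K] {E : ℤ → Module.End K V} {c : ℕ → Module.End K V}
    (h : HasPolyExpansion E c) {N : Submodule K V} (hN : ∀ m, ∀ u ∈ N, E m u ∈ N)
    (k : ℕ) {u : V} (hu : u ∈ N) : c k u ∈ N := by
  obtain ⟨n, hn, hkn⟩ := ((h u).and (eventually_gt_atTop k)).exists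
  exact mem_of_forall_sum_pow_smul_mem N (fun m => hn m ▸ hN m u hu) hkn

theorem sum_range_sum_range_pow_smul (x : K) {A B n : ℕ} (hn : A + B ≤ n) (F : ℕ → ℕ → V)
    (hA : ∀ i j, A ≤ i → F i j = 0) (hB : ∀ i j, B ≤ j → F i j = 0) :
    ∑ i ∈ range A, ∑ j ∈ range B, x ^ (i + j) • F i j
      = ∑ k ∈ range n, x ^ k • ∑ p ∈ antidiagonal k, F p.1 p.2 := by
  rw [← sum_product' (f := fun i j => x ^ (i + j) • F i j),
    ← sum_fiberwise_of_maps_to (g := fun p => p.1 + p.2) (t := range n)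
      (fun p hp => by simp only [mem_product, mem_range] at hp ⊢; omega)]
  refine sum_congr rfl fun k _ => ?_
  rw [smul_sum]
  calc _ = ∑ p ∈ range A ×ˢ range B with p.1 + p.2 = k, x ^ k • F p.1 p.2 :=
        sum_congr rfl fun p hp => by rw [(mem_filter.1 hp).2]
    _ = _ := by
      refine sum_subset (fun p hp => by simpa using (mem_filter.1 hp).2) fun p hp hp' => ?_
      simp only [mem_filter, mem_product, mem_range, HasAntidiagonal.mem_antidiagonal] at hp hp'
      by_cases hpA : A ≤ p.1
      · rw [hA _ _ hpA, smul_zero]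
      · rw [hB _ _ (by omega), smul_zero]

theorem HasPolyExpansion.sum_pow_smul_mul {F : ℤ → Module.End K V} {e : ℕ → Module.End K V}
    (hF : HasPolyExpansion F e) {A : ℕ} {Q : ℕ → Module.End K V} (hQ : ∀ i, A ≤ i → Q i = 0) :
    HasPolyExpansion (fun m => ∑ i ∈ range A, (m : K) ^ i • (Q i * F m))
      (fun k => ∑ p ∈ antidiagonal k, Q p.1 * e p.2) := by
  intro u
  obtain ⟨B, hB⟩ := eventually_atTop.1 ((hF u).and (hF.eventually_apply_eq_zero u))
  have he : ∀ j, B ≤ j → e j u = 0 := fun j hj => (hB j hj).2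
  filter_upwards [eventually_ge_atTop (A + B)] with n hn m
  simp only [LinearMap.sum_apply, LinearMap.smul_apply, Module.End.mul_apply]
  rw [← sum_range_sum_range_pow_smul (m : K) hn (fun i j => Q i (e j u))
    (fun i j hi => by rw [hQ i hi, LinearMap.zero_apply]) (fun i j hj => by rw [he j hj, map_zero])]
  simp only [(hB B le_rfl).1 m, map_sum, map_smul, smul_sum, smul_smul, pow_add]

theorem HasPolyExpansion.lTensor {E : ℤ → Module.End K V} {c : ℕ → Module.End K V}
    (h : HasPolyExpansion E c) (W : Type*) [AddCommGroup W] [Module K W] :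
    HasPolyExpansion (fun m => (E m).lTensor W) (fun k => (c k).lTensor W) := by
  intro u
  induction u using TensorProduct.induction_on with
  | zero => simp
  | tmul w v =>
    filter_upwards [h v] with n hn m
    simp only [LinearMap.lTensor_tmul, hn m, tmul_sum, tmul_smul]
  | add u u' hu hu' =>
    filter_upwards [hu, hu'] with n hu hu' m
    simp only [map_add, hu m, hu' m, smul_add, sum_add_distrib]

end PolyExpansion

theorem shiftOp_apply (m : ℤ) (f : ℂ[X]) : shiftOp m f = f.comp (X - C (m : ℂ)) := by
  simp [shiftOp, aeval_def, eval₂_eq_eval_map, comp]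

theorem hasPolyExpansion_shiftOp :
    HasPolyExpansion shiftOp (fun j => (-1 : ℂ) ^ j • hasseDeriv j) := by
  intro f
  induction f using Polynomial.induction_on' with
  | add p q hp hq =>
    filter_upwards [hp, hq] with n hp hq m
    simp only [map_add, hp m, hq m, smul_add, sum_add_distrib]
  | monomial k a =>
    filter_upwards [eventually_gt_atTop k] with n hn m
    have hsub : (X - C (m : ℂ)) ^ k
        = ∑ j ∈ range (k + 1), C (-(m : ℂ)) ^ j * X ^ (k - j) * (k.choose j : ℂ[X]) := by
      rw [← add_pow, sub_eq_neg_add, ← C_neg]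
    rw [shiftOp_apply, monomial_comp, hsub, mul_sum]
    symm
    rw [← sum_subset (range_subset_range.2 (show k + 1 ≤ n by omega)) fun j _ hj => ?_]
    · refine sum_congr rfl fun j hj => ?_
      rw [LinearMap.smul_apply, hasseDeriv_monomial, smul_smul, ← C_mul_X_pow_eq_monomial]
      simp only [smul_eq_C_mul, ← C_eq_natCast, C_mul, C_pow, C_neg, C_1]
      ring
    · rw [LinearMap.smul_apply, hasseDeriv_monomial,
        Nat.choose_eq_zero_of_lt (by simpa using hj)]
      simp

namespace BrData

variable {r : ℕ} {M : Type*} [AddCommGroup M] [Module ℂ M] (B : BrData r M)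

def aNat (i : ℕ) : Module.End ℂ M := if h : i < r + 1 then B.a ⟨i, h⟩ else 0

theorem aNat_val (i : Fin (r + 1)) : B.aNat i = B.a i := by
  simp [aNat, i.isLt]

theorem aNat_of_lt {i : ℕ} (hi : r < i) : B.aNat i = 0 := by
  simp [aNat, show ¬ i < r + 1 by omega]

noncomputable def gCoeff (β : ℂ) (i : ℕ) : Module.End ℂ M :=
  ((i + 1).factorial : ℂ)⁻¹ • B.aNat i - if i = 0 then β • 1 else 0

theorem gCoeff_of_lt (β : ℂ) {i : ℕ} (hi : r < i) : B.gCoeff β i = 0 := by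
  simp [gCoeff, B.aNat_of_lt hi, show i ≠ 0 by omega]

theorem aNat_eq_smul_gCoeff (β : ℂ) (i : ℕ) :
    B.aNat i = ((i + 1).factorial : ℂ) • (B.gCoeff β i + if i = 0 then β • 1 else 0) := by
  rw [gCoeff, sub_add_cancel, smul_inv_smul₀ (by exact_mod_cast (i + 1).factorial_ne_zero)]

theorem sum_pow_smul_gCoeff (β : ℂ) (m : ℤ) :
    ∑ i ∈ range (r + 1), (m : ℂ) ^ (i + 1) • B.gCoeff β i = gOp B m - (β * m) • 1 := by
  simp only [gCoeff, smul_sub, sum_sub_distrib, gOp, smul_smul, smul_ite, smul_zero,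
    sum_ite_eq', mem_range, Nat.zero_lt_succ, if_true, zero_add, pow_one]
  rw [← Fin.sum_univ_eq_sum_range
    (fun i => ((m : ℂ) ^ (i + 1) * ((i + 1).factorial : ℂ)⁻¹) • B.aNat i)]
  simp only [aNat_val, div_eq_mul_inv, mul_comm β]

noncomputable def prefactorCoeff (β : ℂ) : ℕ → Module.End ℂ (M ⊗[ℂ] ℂ[X])
  | 0 => (LinearMap.mulLeft ℂ X).lTensor M
  | i + 1 => (B.gCoeff β i).rTensor ℂ[X]

noncomputable def coeffOp (β : ℂ) (k : ℕ) : Module.End ℂ (M ⊗[ℂ] ℂ[X]) :=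
  ∑ p ∈ antidiagonal k, B.prefactorCoeff β p.1 * ((-1 : ℂ) ^ p.2 • hasseDeriv p.2).lTensor M

theorem DF_eq (l β : ℂ) (m : ℤ) :
    DF B l β m = l ^ m • ∑ i ∈ range (r + 2),
      (m : ℂ) ^ i • (B.prefactorCoeff β i * (shiftOp m).lTensor M) := by
  refine TensorProduct.ext' fun v f => ?_
  have hg : ∑ i ∈ range (r + 1), (m : ℂ) ^ (i + 1) • B.gCoeff β i v = gOp B m v - (β * m) • v := by
    simpa using congrArg (· v) (B.sum_pow_smul_gCoeff β m)
  rw [sum_range_succ']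
  simp only [LinearMap.smul_apply, LinearMap.add_apply, LinearMap.sum_apply,
    Module.End.mul_apply, LinearMap.lTensor_tmul, prefactorCoeff, LinearMap.rTensor_tmul,
    smul_tmul', ← sum_tmul, pow_zero, one_smul, hg]
  simp only [DF, DOp, XOp, LinearMap.add_apply, map_tmul, LinearMap.smul_apply,
    LinearMap.comp_apply, LinearMap.mulLeft_apply, LinearMap.id_apply, sub_mul, ← smul_eq_C_mul,
    tmul_sub, sub_tmul, tmul_smul, ← smul_tmul']
  module

theorem hasPolyExpansion_DF {l : ℂ} (hl : l ≠ 0) (β : ℂ) :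
    HasPolyExpansion (fun m => (l ^ m)⁻¹ • DF B l β m) (B.coeffOp β) := by
  have hQ : ∀ i, r + 2 ≤ i → B.prefactorCoeff β i = 0
    | 0, hi => by omega
    | i + 1, hi => by simp [prefactorCoeff, B.gCoeff_of_lt β (show r < i by omega)]
  convert (hasPolyExpansion_shiftOp.lTensor M).sum_pow_smul_mul hQ using 1
  · funext m
    rw [DF_eq, inv_smul_smul₀ (zpow_ne_zero m hl)]
  · rfl

theorem coeffOp_apply_mem {l : ℂ} (hl : l ≠ 0) (β : ℂ) {N : Submodule ℂ (M ⊗[ℂ] ℂ[X])}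
    (hN : ∀ m : ℤ, ∀ u ∈ N, DF B l β m u ∈ N) (k : ℕ) {u : M ⊗[ℂ] ℂ[X]} (hu : u ∈ N) :
    B.coeffOp β k u ∈ N :=
  (B.hasPolyExpansion_DF hl β).apply_mem (fun m u hu => N.smul_mem _ (hN m u hu)) k hu

theorem coeffOp_zero (β : ℂ) : B.coeffOp β 0 = (LinearMap.mulLeft ℂ X).lTensor M := by
  simp [coeffOp, prefactorCoeff, Module.End.mul_eq_comp]

end BrData

theorem finiteDimensional_of_forall_eq_smul_one {K M ι : Type*} [Field K] [AddCommGroup M]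
    [Module K M] (φ : ι → Module.End K M)
    (hirr : ∀ N : Submodule K M, (∀ i, ∀ v ∈ N, φ i v ∈ N) → N = ⊥ ∨ N = ⊤)
    (hφ : ∀ i, ∃ c : K, φ i = c • 1) : FiniteDimensional K M := by
  rcases subsingleton_or_nontrivial M with _ | _
  · infer_instance
  obtain ⟨w, hw⟩ := exists_ne (0 : M)
  have hinv : ∀ i, ∀ v ∈ K ∙ w, φ i v ∈ K ∙ w := fun i v hv => by
    obtain ⟨c, hc⟩ := hφ i
    simpa [hc] using Submodule.smul_mem _ c hv
  rcases hirr _ hinv with h | h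
  · exact absurd (Submodule.span_singleton_eq_bot.1 h) hw
  · exact Module.finite_def.2 (h ▸ Submodule.fg_span_singleton w)

section TensorCoeff

variable {M : Type*} [AddCommGroup M] [Module ℂ M]

noncomputable def tensorCoeff : M ⊗[ℂ] ℂ[X] ≃ₗ[ℂ] (ℕ →₀ M) :=
  TensorProduct.equivFinsuppOfBasisRight (basisMonomials ℂ)

theorem tensorCoeff_tmul (v : M) (f : ℂ[X]) (n : ℕ) : tensorCoeff (v ⊗ₜ f) n = f.coeff n • v :=
  TensorProduct.equivFinsuppOfBasisRight_apply_tmul_apply _ v f n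

theorem tensorCoeff_symm_single (v : M) (n : ℕ) :
    tensorCoeff.symm (Finsupp.single n v) = v ⊗ₜ (X ^ n : ℂ[X]) := by
  simp [tensorCoeff, X_pow_eq_monomial]

variable (M) in
noncomputable def degLE (d : ℕ) : Submodule ℂ (M ⊗[ℂ] ℂ[X]) :=
  (Finsupp.supported M ℂ (Set.Iic d)).comap tensorCoeff.toLinearMap

theorem mem_degLE {d : ℕ} {u : M ⊗[ℂ] ℂ[X]} : u ∈ degLE M d ↔ ∀ n, d < n → tensorCoeff u n = 0 := by
  simp [degLE, Finsupp.mem_supported']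

theorem tensorCoeff_lTensor_hasseDeriv (j : ℕ) (u : M ⊗[ℂ] ℂ[X]) (n : ℕ) :
    tensorCoeff ((hasseDeriv j).lTensor M u) n
      = ((n + j).choose j : ℂ) • tensorCoeff u (n + j) := by
  induction u using TensorProduct.induction_on with
  | zero => simp
  | tmul v f => simp [tensorCoeff_tmul, hasseDeriv_coeff, smul_smul]
  | add u u' hu hu' => simp [hu, hu']

theorem tensorCoeff_rTensor (φ : Module.End ℂ M) (u : M ⊗[ℂ] ℂ[X]) (n : ℕ) :
    tensorCoeff (φ.rTensor ℂ[X] u) n = φ (tensorCoeff u n) := by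
  induction u using TensorProduct.induction_on with
  | zero => simp
  | tmul v f => simp [tensorCoeff_tmul]
  | add u u' hu hu' => simp [hu, hu']

theorem tensorCoeff_lTensor_mulLeft_X (u : M ⊗[ℂ] ℂ[X]) (n : ℕ) :
    tensorCoeff ((LinearMap.mulLeft ℂ X).lTensor M u) (n + 1) = tensorCoeff u n := by
  induction u using TensorProduct.induction_on with
  | zero => simp
  | tmul v f => simp [tensorCoeff_tmul]
  | add u u' hu hu' => simp [hu, hu']

theorem tensorCoeff_lTensor_mulLeft_X_zero (u : M ⊗[ℂ] ℂ[X]) :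
    tensorCoeff ((LinearMap.mulLeft ℂ X).lTensor M u) 0 = 0 := by
  induction u using TensorProduct.induction_on with
  | zero => simp
  | tmul v f => simp [tensorCoeff_tmul]
  | add u u' hu hu' => simp [hu, hu']

theorem exists_mem_degLE (u : M ⊗[ℂ] ℂ[X]) : ∃ d, u ∈ degLE M d :=
  ⟨(tensorCoeff u).support.sup id, mem_degLE.2 fun _ hn => Finsupp.notMem_support_iff.1 fun h =>
    (Finset.le_sup (f := id) h).not_gt hn⟩

theorem eq_tmul_one_of_mem_degLE_zero {u : M ⊗[ℂ] ℂ[X]} (hu : u ∈ degLE M 0) :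
    u = tensorCoeff u 0 ⊗ₜ 1 := by
  have : tensorCoeff u = Finsupp.single 0 (tensorCoeff u 0) := by
    ext (_ | n)
    · simp
    · simp [mem_degLE.1 hu (n + 1) n.succ_pos]
  simpa using congrArg tensorCoeff.symm this |>.trans (tensorCoeff_symm_single _ 0)

theorem tensorCoeff_lTensor_mulLeft_X_hasseDeriv {e n j : ℕ} {u : M ⊗[ℂ] ℂ[X]}
    (hu : u ∈ degLE M e) (hnj : e + 1 ≤ n + j) :
    tensorCoeff ((LinearMap.mulLeft ℂ X).lTensor M ((hasseDeriv j).lTensor M u)) n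
      = if n + j = e + 1 then (e.choose j : ℂ) • tensorCoeff u e else 0 := by
  rcases n with _ | n
  · rw [tensorCoeff_lTensor_mulLeft_X_zero]
    split_ifs with h
    · rw [Nat.choose_eq_zero_of_lt (by omega), Nat.cast_zero, zero_smul]
    · rfl
  · rw [tensorCoeff_lTensor_mulLeft_X, tensorCoeff_lTensor_hasseDeriv]
    split_ifs with h
    · rw [show n + j = e by omega]
    · rw [mem_degLE.1 hu _ (by omega), smul_zero]

theorem exists_minimal_degLE {N : Submodule ℂ (M ⊗[ℂ] ℂ[X])} (hN : N ≠ ⊥) :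
    ∃ d, N ⊓ degLE M d ≠ ⊥ ∧ ∀ u ∈ N ⊓ degLE M d, tensorCoeff u d = 0 → u = 0 := by
  classical
  have hex : ∃ d, N ⊓ degLE M d ≠ ⊥ := by
    obtain ⟨u, hu, hu0⟩ := Submodule.exists_mem_ne_zero_of_ne_bot hN
    obtain ⟨d, hd⟩ := exists_mem_degLE u
    exact ⟨d, fun h => hu0 ((Submodule.mem_bot ℂ).1 (h ▸ ⟨hu, hd⟩))⟩
  refine ⟨Nat.find hex, Nat.find_spec hex, fun u hu hud => ?_⟩
  have hlow : ∀ n, Nat.find hex ≤ n → tensorCoeff u n = 0 := fun n hn =>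
    (eq_or_lt_of_le hn).elim (· ▸ hud) (mem_degLE.1 hu.2 n)
  rcases Nat.eq_zero_or_pos (Nat.find hex) with h0 | hpos
  · exact tensorCoeff.map_eq_zero_iff.1 (Finsupp.ext fun n => hlow n (by omega))
  · have hbot := not_not.1 (Nat.find_min hex (Nat.sub_lt hpos one_pos))
    exact (Submodule.mem_bot ℂ).1 (hbot ▸ ⟨hu.1, mem_degLE.2 fun n hn => hlow n (by omega)⟩)

theorem eq_top_of_tmul_one_mem {N : Submodule ℂ (M ⊗[ℂ] ℂ[X])}
    (hX : ∀ u ∈ N, (LinearMap.mulLeft ℂ X).lTensor M u ∈ N)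
    (h1 : ∀ v : M, v ⊗ₜ 1 ∈ N) : N = ⊤ := by
  have hpow : ∀ (n : ℕ) (v : M), v ⊗ₜ (X ^ n : ℂ[X]) ∈ N := by
    intro n v
    induction n with
    | zero => simpa using h1 v
    | succ n ih => simpa [pow_succ'] using hX _ ih
  rw [eq_top_iff, ← TensorProduct.span_tmul_eq_top, Submodule.span_le]
  rintro _ ⟨v, f, rfl⟩
  induction f using Polynomial.induction_on' with
  | add p q hp hq => simpa [tmul_add] using add_mem hp hq
  | monomial n a => simpa [← C_mul_X_pow_eq_monomial, ← smul_eq_C_mul] using N.smul_mem a (hpow n v)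

end TensorCoeff

namespace BrData

variable {r : ℕ} {M : Type*} [AddCommGroup M] [Module ℂ M] (B : BrData r M)

theorem coeffOp_succ_apply (β : ℂ) (k : ℕ) (u : M ⊗[ℂ] ℂ[X]) :
    B.coeffOp β (k + 1) u
      = (-1 : ℂ) ^ (k + 1) • (LinearMap.mulLeft ℂ X).lTensor M ((hasseDeriv (k + 1)).lTensor M u)
        + ∑ p ∈ antidiagonal k,
            (-1 : ℂ) ^ p.2 • (B.gCoeff β p.1).rTensor ℂ[X] ((hasseDeriv p.2).lTensor M u) := by
  simp [coeffOp, Nat.sum_antidiagonal_succ, prefactorCoeff, LinearMap.lTensor_smul]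

theorem tensorCoeff_coeffOp_succ (β : ℂ) (k : ℕ) (u : M ⊗[ℂ] ℂ[X]) (n : ℕ) :
    tensorCoeff (B.coeffOp β (k + 1) u) n
      = (-1 : ℂ) ^ (k + 1) •
          tensorCoeff ((LinearMap.mulLeft ℂ X).lTensor M ((hasseDeriv (k + 1)).lTensor M u)) n
        + ∑ p ∈ antidiagonal k, ((-1 : ℂ) ^ p.2 * (n + p.2).choose p.2) •
            B.gCoeff β p.1 (tensorCoeff u (n + p.2)) := by
  simp [coeffOp_succ_apply, tensorCoeff_rTensor, tensorCoeff_lTensor_hasseDeriv, mul_smul]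

theorem coeffOp_succ_mem_degLE (β : ℂ) (k : ℕ) {d : ℕ} {u : M ⊗[ℂ] ℂ[X]} (hu : u ∈ degLE M d) :
    B.coeffOp β (k + 1) u ∈ degLE M d := by
  refine mem_degLE.2 fun n hn => ?_
  rw [tensorCoeff_coeffOp_succ, tensorCoeff_lTensor_mulLeft_X_hasseDeriv hu (by omega),
    if_neg (by omega), smul_zero, zero_add]
  exact sum_eq_zero fun p _ => by rw [mem_degLE.1 hu _ (by omega), map_zero, smul_zero]

theorem tensorCoeff_coeffOp_succ_of_mem_degLE (β : ℂ) (k : ℕ) {d : ℕ} {u : M ⊗[ℂ] ℂ[X]}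
    (hu : u ∈ degLE M d) :
    tensorCoeff (B.coeffOp β (k + 1) u) d
      = B.gCoeff β k (tensorCoeff u d) - if k = 0 then (d : ℂ) • tensorCoeff u d else 0 := by
  rw [tensorCoeff_coeffOp_succ, tensorCoeff_lTensor_mulLeft_X_hasseDeriv hu (by omega),
    sum_eq_single (k, 0) (fun p hp hne => ?_) (by simp)]
  · rcases k with _ | k <;> simp [sub_eq_neg_add]
  · rw [HasAntidiagonal.mem_antidiagonal] at hp
    rw [mem_degLE.1 hu _ (by grind), map_zero, smul_zero]

theorem tensorCoeff_coeffOp_add_two_of_mem_degLE (β : ℂ) (k : ℕ) {n : ℕ} {u : M ⊗[ℂ] ℂ[X]}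
    (hu : u ∈ degLE M (n + 1)) :
    tensorCoeff (B.coeffOp β (k + 2) u) n
      = (if k = 0 then ((n + 1).choose 2 : ℂ) • tensorCoeff u (n + 1) else 0)
        + B.gCoeff β (k + 1) (tensorCoeff u n)
        - ((n : ℂ) + 1) • B.gCoeff β k (tensorCoeff u (n + 1)) := by
  rw [tensorCoeff_coeffOp_succ, tensorCoeff_lTensor_mulLeft_X_hasseDeriv hu (by omega),
    Nat.sum_antidiagonal_succ', sum_eq_single (k, 0) (fun p hp hne => ?_) (by simp)]
  · rcases k with _ | k
    · simp
      module
    · simp [show n + (k + 1 + 2) ≠ n + 1 + 1 by omega]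
      module
  · rw [HasAntidiagonal.mem_antidiagonal] at hp
    rw [mem_degLE.1 hu _ (by grind), map_zero, smul_zero]

theorem map_tensorCoeff_eq_top {β : ℂ} {N : Submodule ℂ (M ⊗[ℂ] ℂ[X])}
    (hN : ∀ k, ∀ u ∈ N, B.coeffOp β k u ∈ N)
    (hirr : ∀ N : Submodule ℂ M, (∀ i : Fin (r + 1), ∀ v ∈ N, B.a i v ∈ N) → N = ⊥ ∨ N = ⊤)
    {d : ℕ} (hd : N ⊓ degLE M d ≠ ⊥) (hmin : ∀ u ∈ N ⊓ degLE M d, tensorCoeff u d = 0 → u = 0) :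
    (N ⊓ degLE M d).map (Finsupp.lapply d ∘ₗ tensorCoeff.toLinearMap) = ⊤ := by
  refine (hirr _ fun i w hw => ?_).resolve_left fun hbot => hd ?_
  · obtain ⟨u, hu, rfl⟩ := hw
    have hg : B.gCoeff β i (tensorCoeff u d)
        ∈ (N ⊓ degLE M d).map (Finsupp.lapply d ∘ₗ tensorCoeff.toLinearMap) := by
      refine ⟨B.coeffOp β (i + 1) u + if (i : ℕ) = 0 then (d : ℂ) • u else 0,
        ⟨add_mem (hN _ u hu.1) ?_, add_mem (B.coeffOp_succ_mem_degLE β i hu.2) ?_⟩, ?_⟩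
      · split_ifs <;> simp [N.smul_mem _ hu.1]
      · split_ifs <;> simp [Submodule.smul_mem _ _ hu.2]
      · simp [B.tensorCoeff_coeffOp_succ_of_mem_degLE β i hu.2]
        split_ifs <;> simp
    rw [← aNat_val, B.aNat_eq_smul_gCoeff β]
    refine Submodule.smul_mem _ _ ?_
    split_ifs
    · simpa using add_mem hg (Submodule.smul_mem _ β ⟨u, hu, rfl⟩)
    · simpa using hg
  · refine (Submodule.eq_bot_iff _).2 fun u hu => hmin u hu ?_
    simpa using (Submodule.eq_bot_iff _).1 hbot _ ⟨u, hu, rfl⟩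

theorem gCoeff_eq_of_section {β : ℂ} {N : Submodule ℂ (M ⊗[ℂ] ℂ[X])}
    (hN : ∀ k, ∀ u ∈ N, B.coeffOp β k u ∈ N) {n : ℕ}
    (hmin : ∀ u ∈ N ⊓ degLE M (n + 1), tensorCoeff u (n + 1) = 0 → u = 0)
    (S : M →ₗ[ℂ] M ⊗[ℂ] ℂ[X]) (hS : ∀ w, S w ∈ N ⊓ degLE M (n + 1))
    (hStop : ∀ w, tensorCoeff (S w) (n + 1) = w) :
    (∀ k, B.gCoeff β (k + 1) = 0) ∧ B.gCoeff β 0 = ((n : ℂ) / 2) • 1 := by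
  have hshift : ∀ k w, B.coeffOp β (k + 2) (S w) = S (B.gCoeff β (k + 1) w) := fun k w => by
    refine sub_eq_zero.1 (hmin _ ⟨sub_mem (hN _ _ (hS w).1) (hS _).1,
      sub_mem (B.coeffOp_succ_mem_degLE β (k + 1) (hS w).2) (hS _).2⟩ ?_)
    simp [B.tensorCoeff_coeffOp_succ_of_mem_degLE β (k + 1) (hS w).2, hStop]
  -- `T w := tensorCoeff (S w) n` satisfies `[gCoeff (k + 1), T] = (n + 1) • gCoeff k` for `k ≠ 0`
  have hcomm : ∀ k w, (if k = 0 then ((n + 1).choose 2 : ℂ) • w else 0)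
      + B.gCoeff β (k + 1) (tensorCoeff (S w) n) - ((n : ℂ) + 1) • B.gCoeff β k w
        = tensorCoeff (S (B.gCoeff β (k + 1) w)) n := fun k w => by
    rw [← hshift, B.tensorCoeff_coeffOp_add_two_of_mem_degLE β k (hS w).2, hStop]
  have hn1 : (n : ℂ) + 1 ≠ 0 := by exact_mod_cast n.succ_ne_zero
  have hstep : ∀ k, B.gCoeff β (k + 2) = 0 → B.gCoeff β (k + 1) = 0 := fun k hk =>
    LinearMap.ext fun w => by
      have := hcomm (k + 1) w
      simp only [hk, if_neg k.succ_ne_zero, LinearMap.zero_apply, map_zero, Finsupp.coe_zero,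
        Pi.zero_apply, zero_add, zero_sub, neg_eq_zero] at this
      exact (smul_eq_zero.1 this).resolve_left hn1
  have hvanish : ∀ k, B.gCoeff β (k + 1) = 0 := fun k => by
    rcases le_or_gt k r with hk | hk
    · exact Nat.decreasingInduction (motive := fun k _ => B.gCoeff β (k + 1) = 0)
        (fun k _ => hstep k) (B.gCoeff_of_lt β (by omega)) hk
    · exact B.gCoeff_of_lt β (by omega)
  refine ⟨hvanish, LinearMap.ext fun w => smul_right_injective _ hn1 ?_⟩
  have := hcomm 0 w
  simp only [if_pos, hvanish 0, LinearMap.zero_apply, map_zero, Finsupp.coe_zero, Pi.zero_apply,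
    add_zero, sub_eq_zero] at this
  simp only [← this, Nat.cast_choose_two, LinearMap.smul_apply, Module.End.one_apply, smul_smul]
  congr 1
  push_cast
  ring

theorem exists_a_eq_smul_one {β c : ℂ} (h1 : ∀ k, B.gCoeff β (k + 1) = 0)
    (h0 : B.gCoeff β 0 = c • 1) (i : Fin (r + 1)) : ∃ c : ℂ, B.a i = c • 1 := by
  rw [← B.aNat_val, B.aNat_eq_smul_gCoeff β]
  rcases (i : ℕ) with _ | k
  · exact ⟨c + β, by simp [h0, add_smul]⟩
  · exact ⟨0, by simp [h1]⟩

end BrData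

/-- for irreducible `𝓑_r`-data on an infinite-dimensional space `M` and `λ ≠ 0`,
the Virasoro module `F(M, Ω(λ,β))` is irreducible. -/
theorem F_omega_irreducible {r : ℕ} {M : Type*} [AddCommGroup M] [Module ℂ M]
    (B : BrData r M)
    (hirr : ∀ N : Submodule ℂ M, (∀ i : Fin (r + 1), ∀ v ∈ N, B.a i v ∈ N) → N = ⊥ ∨ N = ⊤)
    (hinf : ¬ FiniteDimensional ℂ M)
    (l : ℂ) (hl : l ≠ 0) (b : ℂ) :
    ∀ N : Submodule ℂ (M ⊗[ℂ] Polynomial ℂ),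
      (∀ m : ℤ, ∀ u ∈ N, DF B l b m u ∈ N) → N = ⊥ ∨ N = ⊤ := by
  intro N hN
  refine or_iff_not_imp_left.2 fun hbot => ?_
  have hc : ∀ k, ∀ u ∈ N, B.coeffOp b k u ∈ N := fun k _ hu => B.coeffOp_apply_mem hl b hN k hu
  obtain ⟨d, hd, hmin⟩ := exists_minimal_degLE hbot
  have htop := B.map_tensorCoeff_eq_top hc hirr hd hmin
  rcases d with _ | n
  · refine eq_top_of_tmul_one_mem (fun u hu => B.coeffOp_zero b ▸ hc 0 u hu) fun v => ?_
    obtain ⟨u, hu, rfl⟩ := htop ▸ Submodule.mem_top (x := v)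
    simpa [← eq_tmul_one_of_mem_degLE_zero hu.2] using hu.1
  · obtain ⟨g, hg⟩ := LinearMap.exists_rightInverse_of_surjective
      (Finsupp.lapply (n + 1) ∘ₗ tensorCoeff.toLinearMap ∘ₗ (N ⊓ degLE M (n + 1)).subtype)
      (by rw [← LinearMap.comp_assoc, LinearMap.range_comp, Submodule.range_subtype, htop])
    obtain ⟨h1, h0⟩ := B.gCoeff_eq_of_section hc hmin ((N ⊓ degLE M (n + 1)).subtype ∘ₗ g)
      (fun w => (g w).2) (fun w => LinearMap.congr_fun hg w)
    exact absurd (finiteDimensional_of_forall_eq_smul_one B.a hirr (B.exists_a_eq_smul_one h1 h0))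
      hinf
end

section
/- Let r ≥ 1, let (a_0, …, a_r) be 𝓑_r-data on a ℂ-vector space M, let β ∈ ℂ, and let N be a ℂ-subspace of M ⊗ ℂ[t] invariant under D_m for every m ∈ ℤ, where D_m are the operators of F(M, Ω(1,β)). If u = Σ_{n=0}^{l} v_n ⊗ h^n_0 is a nonzero element of N with v_l ≠ 0, then (a_r² v_l) ⊗ f ∈ N for every f ∈ ℂ[t]. -/
open Polynomial TensorProduct

/-- The polynomial `h^n_m = ∏_{j=m+1}^{m+n} (t − j)`, with `h^0_m = 1`. -/
noncomputable def hpoly (m : ℤ) (n : ℕ) : Polynomial ℂ :=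
  ∏ j ∈ Finset.range n, (Polynomial.X - Polynomial.C ((m : ℂ) + (j : ℂ) + 1))

def IsRep {V : Type*} [AddCommGroup V] [Module ℂ V] (d : ℕ) (x : ℕ → V) (F : ℤ → V) : Prop :=
  ∀ m : ℤ, F m = ∑ k ∈ Finset.range (d + 1), ((m : ℂ) ^ k) • x k

section Combinators
variable {V₁ V₂ V₃ : Type*} [AddCommGroup V₁] [Module ℂ V₁] [AddCommGroup V₂] [Module ℂ V₂]
  [AddCommGroup V₃] [Module ℂ V₃]

/-- Cauchy product coefficients for a bilinear map. -/
noncomputable def cauchy (φ : V₁ →ₗ[ℂ] V₂ →ₗ[ℂ] V₃) (d e : ℕ) (x : ℕ → V₁) (y : ℕ → V₂) :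
    ℕ → V₃ :=
  fun n => ∑ k ∈ Finset.range (d + 1), ∑ j ∈ Finset.range (e + 1),
    if k + j = n then φ (x k) (y j) else 0

theorem cauchy_top (φ : V₁ →ₗ[ℂ] V₂ →ₗ[ℂ] V₃) (d e : ℕ) (x : ℕ → V₁) (y : ℕ → V₂) :
    cauchy φ d e x y (d + e) = φ (x d) (y e) := by
  unfold cauchy
  rw [Finset.sum_eq_single d]
  · rw [Finset.sum_eq_single e]
    · rw [if_pos rfl]
    · intro j hj hne
      rw [Finset.mem_range] at hj
      rw [if_neg (by omega)]
    · intro h; exact absurd (Finset.self_mem_range_succ e) h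
  · intro k hk hne
    rw [Finset.mem_range] at hk
    apply Finset.sum_eq_zero
    intro j hj
    rw [Finset.mem_range] at hj
    rw [if_neg (by omega)]
  · intro h; exact absurd (Finset.self_mem_range_succ d) h

theorem IsRep.bilin (φ : V₁ →ₗ[ℂ] V₂ →ₗ[ℂ] V₃) {d e : ℕ} {x : ℕ → V₁} {y : ℕ → V₂}
    {F : ℤ → V₁} {G : ℤ → V₂} (hF : IsRep d x F) (hG : IsRep e y G) :
    IsRep (d + e) (cauchy φ d e x y) (fun m => φ (F m) (G m)) := by
  intro m
  show φ (F m) (G m) = _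
  have lhs : φ (F m) (G m) = ∑ k ∈ Finset.range (d+1), ∑ j ∈ Finset.range (e+1),
      ((m:ℂ)^(k+j)) • φ (x k) (y j) := by
    rw [hF m, hG m]
    simp only [map_sum, LinearMap.sum_apply, map_smul, LinearMap.smul_apply, smul_smul,
      Finset.smul_sum, ← pow_add]
    rw [Finset.sum_comm]
    exact Finset.sum_congr rfl fun j _ => Finset.sum_congr rfl fun k _ => by rw [Nat.add_comm]
  rw [lhs]
  unfold cauchy
  rw [eq_comm]
  have hsm : ∀ n, (m:ℂ)^n • (∑ k ∈ Finset.range (d+1), ∑ j ∈ Finset.range (e+1),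
        if k+j = n then φ (x k) (y j) else 0)
      = ∑ k ∈ Finset.range (d+1), ∑ j ∈ Finset.range (e+1),
        if k+j = n then (m:ℂ)^n • φ (x k) (y j) else 0 := by
    intro n
    rw [Finset.smul_sum]
    refine Finset.sum_congr rfl fun k _ => ?_
    rw [Finset.smul_sum]
    refine Finset.sum_congr rfl fun j _ => ?_
    split <;> simp
  simp only [hsm]
  rw [Finset.sum_comm]
  refine Finset.sum_congr rfl fun k hk => ?_
  rw [Finset.sum_comm]
  refine Finset.sum_congr rfl fun j hj => ?_
  rw [Finset.sum_ite_eq (Finset.range (d+e+1)) (k+j) (fun n => (m:ℂ)^n • φ (x k) (y j))]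
  rw [Finset.mem_range] at hk hj
  rw [if_pos (Finset.mem_range.2 (by omega))]

end Combinators

theorem IsRep.pad {V : Type*} [AddCommGroup V] [Module ℂ V] {d d' : ℕ} (h : d ≤ d')
    {x : ℕ → V} {F : ℤ → V} (hF : IsRep d x F) :
    IsRep d' (fun k => if k ≤ d then x k else 0) F := by
  intro m
  rw [hF m]
  rw [← Finset.sum_subset (Finset.range_subset_range.2 (by omega : d + 1 ≤ d' + 1))]
  · refine Finset.sum_congr rfl fun k hk => ?_
    rw [Finset.mem_range] at hk
    simp only []
    rw [if_pos (by omega)]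
  · intro k _ hk
    rw [Finset.mem_range] at hk
    simp only []
    rw [if_neg (by omega), smul_zero]

theorem IsRep.finsetSum {V : Type*} [AddCommGroup V] [Module ℂ V] {ι : Type*} (s : Finset ι)
    {d : ℕ} (x : ι → ℕ → V) (F : ι → ℤ → V) (h : ∀ i ∈ s, IsRep d (x i) (F i)) :
    IsRep d (fun k => ∑ i ∈ s, x i k) (fun m => ∑ i ∈ s, F i m) := by
  intro m
  calc ∑ i ∈ s, F i m = ∑ i ∈ s, ∑ k ∈ Finset.range (d+1), ((m:ℂ)^k) • x i k :=
        Finset.sum_congr rfl fun i hi => h i hi m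
    _ = ∑ k ∈ Finset.range (d+1), ((m:ℂ)^k) • ∑ i ∈ s, x i k := by
        rw [Finset.sum_comm]
        exact Finset.sum_congr rfl fun k _ => by rw [Finset.smul_sum]

theorem IsRep.const {V : Type*} [AddCommGroup V] [Module ℂ V] (v : V) :
    IsRep 0 (fun _ => v) (fun _ => v) := by intro m; simp

theorem IsRep.endApply {M : Type*} [AddCommGroup M] [Module ℂ M] {d : ℕ}
    {x : ℕ → Module.End ℂ M} {F : ℤ → Module.End ℂ M} (h : IsRep d x F) (v : M) :
    IsRep d (fun k => x k v) (fun m => F m v) := by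
  intro m
  show F m v = _
  rw [h m]
  simp [LinearMap.sum_apply]

theorem top_mem {V : Type*} [AddCommGroup V] [Module ℂ V] (N : Submodule ℂ V) :
    ∀ (d : ℕ) (x : ℕ → V) (F : ℤ → V), IsRep d x F → (∀ m, F m ∈ N) → x d ∈ N := by
  intro d
  induction d with
  | zero =>
    intro x F hrep hmem
    have h0 := hmem 0
    rw [hrep 0] at h0
    simpa using h0
  | succ d ih =>
    intro x F hrep hmem
    set y : ℕ → V := fun j => ∑ k ∈ Finset.range (d + 2),
      (if j < k then ((k.choose j : ℕ) : ℂ) else 0) • x k with hy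
    have hrep' : IsRep d y (fun m => F (m + 1) - F m) := by
      intro m
      have expand : ∀ k : ℕ, k ∈ Finset.range (d + 2) →
          (((m : ℂ) + 1) ^ k - (m : ℂ) ^ k) =
            ∑ j ∈ Finset.range (d + 1), (if j < k then ((m:ℂ))^j * (k.choose j : ℂ) else 0) := by
        intro k hk
        rw [Finset.mem_range] at hk
        have h1 : ((m : ℂ) + 1) ^ k = ∑ j ∈ Finset.range (k + 1), (m:ℂ)^j * (k.choose j : ℂ) := by
          simpa using add_pow (m : ℂ) 1 k
        have h2 : ∑ j ∈ Finset.range (d + 1), (if j < k then ((m:ℂ))^j * (k.choose j : ℂ) else 0)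
            = ∑ j ∈ Finset.range k, (m:ℂ)^j * (k.choose j : ℂ) := by
          rw [← Finset.sum_subset (Finset.range_subset_range.2 (by omega) :
              Finset.range k ⊆ Finset.range (d+1))]
          · apply Finset.sum_congr rfl
            intro j hj; rw [Finset.mem_range] at hj; rw [if_pos hj]
          · intro j _ hj; rw [Finset.mem_range] at hj; rw [if_neg (by omega)]
        rw [h2, h1, Finset.sum_range_succ]
        simp
      calc F (m + 1) - F m
          = ∑ k ∈ Finset.range (d + 2), ((((m:ℂ) + 1) ^ k - (m:ℂ) ^ k)) • x k := by
            rw [hrep (m+1), hrep m, ← Finset.sum_sub_distrib]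
            apply Finset.sum_congr rfl
            intro k _
            rw [← sub_smul]
            push_cast
            try ring_nf
        _ = ∑ k ∈ Finset.range (d + 2), ∑ j ∈ Finset.range (d + 1),
              (if j < k then ((m:ℂ))^j * (k.choose j : ℂ) else 0) • x k := by
            apply Finset.sum_congr rfl
            intro k hk
            rw [expand k hk, Finset.sum_smul]
        _ = ∑ j ∈ Finset.range (d + 1), ((m:ℂ))^j • y j := by
            rw [Finset.sum_comm]
            apply Finset.sum_congr rfl
            intro j _
            rw [hy, Finset.smul_sum]
            apply Finset.sum_congr rfl
            intro k _
            split <;> simp [mul_smul]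
    have hyd : y d ∈ N := ih y _ hrep' (fun m => N.sub_mem (hmem (m+1)) (hmem m))
    have hydval : y d = ((d : ℂ) + 1) • x (d + 1) := by
      show (∑ k ∈ Finset.range (d + 2), (if d < k then ((k.choose d : ℕ) : ℂ) else 0) • x k) = _
      rw [Finset.sum_eq_single (d + 1)]
      · rw [if_pos (by omega)]
        norm_num [Nat.choose_succ_self_right]
      · intro k hk hne
        rw [Finset.mem_range] at hk
        rw [if_neg (by omega), zero_smul]
      · intro h; exact absurd (Finset.self_mem_range_succ (d+1)) h
    have : (((d : ℂ) + 1)⁻¹) • y d ∈ N := N.smul_mem _ hyd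
    rwa [hydval, smul_smul, inv_mul_cancel₀ (by exact Nat.cast_add_one_ne_zero d), one_smul] at this

section Domain

theorem IsRep.congr {V : Type*} [AddCommGroup V] [Module ℂ V] {d : ℕ} {x : ℕ → V}
    {F G : ℤ → V} (h : IsRep d x F) (hFG : ∀ m, G m = F m) : IsRep d x G := by
  intro m; rw [hFG m]; exact h m

/-- Representation of a linear factor `m ↦ X - C (c + e m)`. -/
theorem linRep (c e : ℂ) :
    IsRep 1 (fun k => if k = 0 then Polynomial.X - Polynomial.C c
      else if k = 1 then Polynomial.C (-e) else 0)
      (fun m => Polynomial.X - Polynomial.C (c + e * (m : ℂ))) := by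
  intro m
  rw [Finset.sum_range_succ, Finset.sum_range_one]
  norm_num [Polynomial.smul_C]
  ring

/-- Representation of `m ↦ h^n_m`, with top coefficient `(-1)^n`. -/
theorem hpolyRep (n : ℕ) : ∃ c : ℕ → Polynomial ℂ,
    c n = Polynomial.C ((-1)^n) ∧ IsRep n c (fun m => hpoly m n) := by
  induction n with
  | zero =>
    refine ⟨fun _ => 1, by simp, ?_⟩
    intro m; simp [hpoly]
  | succ n ih =>
    obtain ⟨c, hc, hrep⟩ := ih
    set y : ℕ → Polynomial ℂ := fun k => if k = 0 then Polynomial.X - Polynomial.C ((n : ℂ) + 1)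
      else if k = 1 then Polynomial.C (-1) else 0 with hy
    have hlin := linRep ((n : ℂ) + 1) 1
    have hmul := (hrep.bilin (LinearMap.mul ℂ (Polynomial ℂ)) hlin)
    refine ⟨cauchy (LinearMap.mul ℂ (Polynomial ℂ)) n 1 c y, ?_, ?_⟩
    · have := cauchy_top (LinearMap.mul ℂ (Polynomial ℂ)) n 1 c y
      rw [this, hc, hy]
      norm_num
      ring
    · exact hmul.congr (fun m => by
        show hpoly m (n+1) = hpoly m n * (Polynomial.X - Polynomial.C ((n:ℂ) + 1 + 1 * (m:ℂ)))
        rw [hpoly, Finset.prod_range_succ]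
        rw [← hpoly]
        push_cast
        ring_nf)

/-- Coefficients of `g`. -/
noncomputable def gCoeff {r : ℕ} {M : Type*} [AddCommGroup M] [Module ℂ M] (B : BrData r M) :
    ℕ → Module.End ℂ M :=
  fun k => if h : 1 ≤ k ∧ k - 1 < r + 1 then (((k.factorial : ℕ) : ℂ))⁻¹ • B.a ⟨k - 1, h.2⟩ else 0

theorem gRep {r : ℕ} {M : Type*} [AddCommGroup M] [Module ℂ M] (B : BrData r M) :
    IsRep (r + 1) (gCoeff B) (fun m => gOp B m) := by
  intro m
  show gOp B m = _
  have key : ∑ k ∈ Finset.range (r+2), (m:ℂ)^k • gCoeff B k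
      = ∑ i : Fin (r+1), (((m : ℂ) ^ ((i:ℕ) + 1)) / (Nat.factorial ((i:ℕ) + 1) : ℂ)) • B.a i := by
    rw [Finset.sum_range_succ']
    rw [show gCoeff B 0 = 0 from dif_neg (by omega), smul_zero, add_zero]
    rw [← Fin.sum_univ_eq_sum_range (fun j => (m:ℂ)^(j+1) • gCoeff B (j+1)) (r+1)]
    refine Finset.sum_congr rfl fun i _ => ?_
    have hco : gCoeff B ((i:ℕ)+1)
        = (((((i:ℕ)+1).factorial : ℕ) : ℂ))⁻¹ • B.a ⟨(i:ℕ), i.isLt⟩ := by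
      rw [gCoeff, dif_pos (show 1 ≤ (i:ℕ)+1 ∧ (i:ℕ)+1-1 < r+1 by
        refine ⟨by omega, ?_⟩; simpa using i.isLt)]
      rfl
    simp only [hco]
    rw [smul_smul, div_eq_mul_inv]
  rw [gOp, ← key]

theorem gCoeff_top {r : ℕ} {M : Type*} [AddCommGroup M] [Module ℂ M] (B : BrData r M) :
    gCoeff B (r + 1) = ((((r+1).factorial : ℕ) : ℂ))⁻¹ • B.a (Fin.last r) := by
  rw [gCoeff, dif_pos (by omega)]
  congr 1

end Domain

theorem IsRep.add {V : Type*} [AddCommGroup V] [Module ℂ V] {d : ℕ} {x y : ℕ → V}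
    {F G : ℤ → V} (hF : IsRep d x F) (hG : IsRep d y G) :
    IsRep d (fun k => x k + y k) (fun m => F m + G m) := by
  intro m
  show F m + G m = _
  rw [hF m, hG m, ← Finset.sum_add_distrib]
  exact Finset.sum_congr rfl fun k _ => (smul_add _ _ _).symm

theorem shiftOp_hpoly (m : ℤ) (n : ℕ) : shiftOp m (hpoly 0 n) = hpoly m n := by
  show (Polynomial.aeval (Polynomial.X - Polynomial.C (m:ℂ))) (hpoly 0 n) = hpoly m n
  rw [hpoly, hpoly, map_prod]
  refine Finset.prod_congr rfl fun j _ => ?_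
  rw [map_sub, Polynomial.aeval_X, Polynomial.aeval_C, Polynomial.algebraMap_eq]
  push_cast
  simp only [Polynomial.C_add, Polynomial.C_0, Polynomial.C_1]
  ring

theorem DF_tmul {r : ℕ} {M : Type*} [AddCommGroup M] [Module ℂ M] (B : BrData r M) (b : ℂ)
    (m : ℤ) (v : M) (f : Polynomial ℂ) :
    DF B 1 b m (v ⊗ₜ[ℂ] f)
      = v ⊗ₜ[ℂ] ((Polynomial.X - Polynomial.C (b * (m:ℂ))) * shiftOp m f)
        + (gOp B m v) ⊗ₜ[ℂ] (shiftOp m f) := by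
  rw [DF]
  simp [DOp, XOp, one_zpow, TensorProduct.map_tmul]

theorem gOp_zero {r : ℕ} {M : Type*} [AddCommGroup M] [Module ℂ M] (B : BrData r M) :
    gOp B 0 = 0 := by
  rw [gOp]
  refine Finset.sum_eq_zero fun i _ => ?_
  norm_num

theorem shiftOp_zero (f : Polynomial ℂ) : shiftOp 0 f = f := by
  show (Polynomial.aeval (Polynomial.X - Polynomial.C ((0:ℤ):ℂ))) f = f
  norm_num

theorem spanAll {r : ℕ} {M : Type*} [AddCommGroup M] [Module ℂ M] (B : BrData r M) (b : ℂ)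
    (N : Submodule ℂ (M ⊗[ℂ] Polynomial ℂ))
    (hN : ∀ m : ℤ, ∀ u ∈ N, DF B 1 b m u ∈ N) (w : M)
    (hw : w ⊗ₜ[ℂ] (1 : Polynomial ℂ) ∈ N) : ∀ f : Polynomial ℂ, w ⊗ₜ[ℂ] f ∈ N := by
  have hmul : ∀ f : Polynomial ℂ, w ⊗ₜ[ℂ] f ∈ N → w ⊗ₜ[ℂ] (Polynomial.X * f) ∈ N := by
    intro f hf
    have h0 := hN 0 _ hf
    rw [DF_tmul] at h0
    simpa [gOp_zero, shiftOp_zero] using h0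
  intro f
  induction f using Polynomial.induction_on with
  | C a =>
    have := N.smul_mem a hw
    rwa [show a • (w ⊗ₜ[ℂ] (1 : Polynomial ℂ)) = w ⊗ₜ[ℂ] (Polynomial.C a) by
      rw [← TensorProduct.tmul_smul]
      congr 1
      rw [← Polynomial.algebraMap_eq, Algebra.algebraMap_eq_smul_one]] at this
  | add p q hp hq =>
    have := N.add_mem hp hq
    rwa [← TensorProduct.tmul_add] at this
  | monomial n a hp =>
    have := hmul _ hp
    rwa [show Polynomial.X * (Polynomial.C a * Polynomial.X ^ n)
      = Polynomial.C a * Polynomial.X ^ (n+1) by ring] at this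

theorem roundLemma {r : ℕ} (hr : 1 ≤ r) {M : Type*} [AddCommGroup M] [Module ℂ M]
    (B : BrData r M) (b : ℂ)
    (N : Submodule ℂ (M ⊗[ℂ] Polynomial ℂ))
    (hN : ∀ m : ℤ, ∀ u ∈ N, DF B 1 b m u ∈ N)
    (L : ℕ) (v : ℕ → M)
    (hu : (∑ n ∈ Finset.range (L + 1), v n ⊗ₜ[ℂ] hpoly 0 n) ∈ N) :
    (B.a (Fin.last r) (v L)) ⊗ₜ[ℂ] (1 : Polynomial ℂ) ∈ N := by
  classical
  obtain ⟨c, hc⟩ : ∃ c : ℕ → ℕ → Polynomial ℂ, ∀ n,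
      (c n n = Polynomial.C ((-1:ℂ)^n) ∧ IsRep n (c n) (fun m => hpoly m n)) :=
    ⟨fun n => (hpolyRep n).choose, fun n => (hpolyRep n).choose_spec⟩
  set φ : M →ₗ[ℂ] Polynomial ℂ →ₗ[ℂ] (M ⊗[ℂ] Polynomial ℂ) := TensorProduct.mk ℂ M (Polynomial ℂ) with hφ
  set mulP : Polynomial ℂ →ₗ[ℂ] Polynomial ℂ →ₗ[ℂ] Polynomial ℂ := LinearMap.mul ℂ (Polynomial ℂ) with hmulP
  set ylin : ℕ → Polynomial ℂ := fun k => if k = 0 then Polynomial.X - Polynomial.C 0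
    else if k = 1 then Polynomial.C (-b) else 0 with hylin
  set XA : ℕ → ℕ → (M ⊗[ℂ] Polynomial ℂ) := fun n k =>
    if k ≤ 0 + (1 + n) then cauchy φ 0 (1 + n) (fun _ => v n) (cauchy mulP 1 n ylin (c n)) k
    else 0 with hXA
  set XB : ℕ → ℕ → (M ⊗[ℂ] Polynomial ℂ) := fun n k =>
    if k ≤ (r + 1) + n then cauchy φ (r + 1) n (fun j => gCoeff B j (v n)) (c n) k
    else 0 with hXB
  set FA : ℕ → ℤ → (M ⊗[ℂ] Polynomial ℂ) := fun n m =>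
    φ (v n) (mulP (Polynomial.X - Polynomial.C (b * (m:ℂ))) (hpoly m n)) with hFA
  set FB : ℕ → ℤ → (M ⊗[ℂ] Polynomial ℂ) := fun n m =>
    φ (gOp B m (v n)) (hpoly m n) with hFB
  have hlinrep : IsRep 1 ylin (fun m => Polynomial.X - Polynomial.C (b * (m:ℂ))) :=
    (linRep 0 b).congr (fun m => by norm_num)
  have total : IsRep (r + L + 1)
      (fun k => ∑ n ∈ Finset.range (L + 1), (XA n k + XB n k))
      (fun m => ∑ n ∈ Finset.range (L + 1), (FA n m + FB n m)) := by
    refine IsRep.finsetSum _ _ _ (fun n hn => ?_)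
    rw [Finset.mem_range] at hn
    have repA : IsRep (r + L + 1) (XA n) (FA n) := by
      have h2 := hlinrep.bilin mulP ((hc n).2)
      have h3 := (IsRep.const (v n)).bilin φ h2
      exact (h3.pad (by omega))
    have repB : IsRep (r + L + 1) (XB n) (FB n) := by
      have h2 := ((gRep B).endApply (v n)).bilin φ ((hc n).2)
      exact (h2.pad (by omega))
    exact repA.add repB
  have hmem : ∀ m : ℤ, (∑ n ∈ Finset.range (L + 1), (FA n m + FB n m)) ∈ N := by
    intro m
    have : (∑ n ∈ Finset.range (L + 1), (FA n m + FB n m)) = DF B 1 b m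
        (∑ n ∈ Finset.range (L + 1), v n ⊗ₜ[ℂ] hpoly 0 n) := by
      rw [map_sum]
      refine Finset.sum_congr rfl fun n _ => ?_
      rw [DF_tmul, shiftOp_hpoly]
      rfl
    rw [this]
    exact hN m _ hu
  have htop := top_mem N _ _ _ total hmem
  have hval : (∑ n ∈ Finset.range (L + 1), (XA n (r + L + 1) + XB n (r + L + 1)))
      = (((((r+1).factorial : ℕ) : ℂ))⁻¹ * (-1:ℂ)^L) • (B.a (Fin.last r) (v L)) ⊗ₜ[ℂ] (1 : Polynomial ℂ) := by
    rw [Finset.sum_eq_single L]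
    · have hA : XA L (r + L + 1) = 0 := by
        rw [hXA]; simp only []; rw [if_neg (by omega)]
      have hB : XB L (r + L + 1) = cauchy φ (r + 1) L (fun j => gCoeff B j (v L)) (c L) ((r+1) + L) := by
        rw [hXB]; simp only []; rw [if_pos (by omega)]
        congr 1
        omega
      rw [hA, hB, zero_add, cauchy_top]
      rw [gCoeff_top, (hc L).1]
      rw [LinearMap.smul_apply]
      show ((((r+1).factorial : ℕ) : ℂ)⁻¹ • (B.a (Fin.last r) (v L))) ⊗ₜ[ℂ] (Polynomial.C ((-1:ℂ)^L)) = _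
      rw [show (Polynomial.C ((-1:ℂ)^L)) = ((-1:ℂ)^L) • (1 : Polynomial ℂ) by
        rw [← Polynomial.algebraMap_eq, Algebra.algebraMap_eq_smul_one]]
      rw [TensorProduct.smul_tmul', TensorProduct.tmul_smul, TensorProduct.smul_tmul',
        smul_smul, mul_comm ((-1:ℂ)^L)]
    · intro n hn hne
      rw [Finset.mem_range] at hn
      have hA : XA n (r + L + 1) = 0 := by
        rw [hXA]; simp only []; rw [if_neg (by omega)]
      have hB : XB n (r + L + 1) = 0 := by
        rw [hXB]; simp only []; rw [if_neg (by omega)]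
      rw [hA, hB, add_zero]
    · intro h; exact absurd (Finset.self_mem_range_succ L) h
  rw [hval] at htop
  have hκ : ((((((r+1).factorial : ℕ) : ℂ))⁻¹ * (-1:ℂ)^L)) ≠ 0 := by
    apply mul_ne_zero
    · apply inv_ne_zero
      exact_mod_cast Nat.factorial_ne_zero (r+1)
    · apply pow_ne_zero; norm_num
  have := N.smul_mem (((((r+1).factorial : ℕ) : ℂ))⁻¹ * (-1:ℂ)^L)⁻¹ htop
  rwa [smul_smul, inv_mul_cancel₀ hκ, one_smul] at this

/-- Claim 2: if `N ⊆ M ⊗ ℂ[t]` is invariant under all operators of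
`F(M, Ω(1,β))` and `u = Σ_{n=0}^{l} v_n ⊗ h^n_0` is a nonzero element of `N` with
`v_l ≠ 0`, then `(a_r² v_l) ⊗ f ∈ N` for every `f ∈ ℂ[t]`. -/
theorem claim2 {r : ℕ} (hr : 1 ≤ r) {M : Type*} [AddCommGroup M] [Module ℂ M]
    (B : BrData r M) (b : ℂ)
    (N : Submodule ℂ (M ⊗[ℂ] Polynomial ℂ))
    (hN : ∀ m : ℤ, ∀ u ∈ N, DF B 1 b m u ∈ N)
    (L : ℕ) (v : ℕ → M)
    (hu : (∑ n ∈ Finset.range (L + 1), v n ⊗ₜ[ℂ] hpoly 0 n) ∈ N)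
    (hune : (∑ n ∈ Finset.range (L + 1), v n ⊗ₜ[ℂ] hpoly 0 n) ≠ 0)
    (hvL : v L ≠ 0) :
    ∀ f : Polynomial ℂ, ((B.a (Fin.last r) ^ 2) (v L)) ⊗ₜ[ℂ] f ∈ N := by
  intro f
  have step1 : (B.a (Fin.last r) (v L)) ⊗ₜ[ℂ] (1 : Polynomial ℂ) ∈ N :=
    roundLemma hr B b N hN L v hu
  have hu2 : (∑ n ∈ Finset.range (0 + 1),
      (fun _ => B.a (Fin.last r) (v L)) n ⊗ₜ[ℂ] hpoly 0 n) ∈ N := by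
    simpa [hpoly] using step1
  have step2 := roundLemma hr B b N hN 0 (fun _ => B.a (Fin.last r) (v L)) hu2
  have key := spanAll B b N hN _ step2 f
  have hpow : (B.a (Fin.last r) ^ 2) (v L) = B.a (Fin.last r) (B.a (Fin.last r) (v L)) := by
    rw [pow_two]; rfl
  rwa [hpow]
end

section
/- Let r ∈ ℕ, let (a_0, …, a_r) be 𝓑_r-data on a ℂ-vector space M, let β ∈ ℂ, and let N be a ℂ-subspace of M ⊗ ℂ[t] invariant under D_m for every m ∈ ℤ, where D_m are the operators of F(M, Ω(1,β)). If v ∈ M is such that v ⊗ f ∈ N for every f ∈ ℂ[t], then (a_i v) ⊗ f ∈ N for every 0 ≤ i ≤ r and every f ∈ ℂ[t]. -/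
open Polynomial TensorProduct

/-- Claim 3: if `N ⊆ M ⊗ ℂ[t]` is invariant under all operators of
`F(M, Ω(1,β))` and `v ⊗ f ∈ N` for every `f ∈ ℂ[t]`, then `(a_i v) ⊗ f ∈ N` for every
`0 ≤ i ≤ r` and every `f ∈ ℂ[t]`. -/
theorem claim3 {r : ℕ} {M : Type*} [AddCommGroup M] [Module ℂ M]
    (B : BrData r M) (b : ℂ)
    (N : Submodule ℂ (M ⊗[ℂ] Polynomial ℂ))
    (hN : ∀ m : ℤ, ∀ u ∈ N, DF B 1 b m u ∈ N)
    (v : M) (hv : ∀ f : Polynomial ℂ, v ⊗ₜ[ℂ] f ∈ N) :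
    ∀ (i : Fin (r + 1)) (f : Polynomial ℂ), (B.a i v) ⊗ₜ[ℂ] f ∈ N := by
  have hshift : ∀ (m : ℤ) (f : Polynomial ℂ), shiftOp m (shiftOp (-m) f) = f := by
    intro m f
    simp only [shiftOp, AlgHom.toLinearMap_apply, ← Polynomial.aeval_algHom_apply]
    simp
  have hg : ∀ (m : ℤ) (f : Polynomial ℂ), (gOp B m v) ⊗ₜ[ℂ] f ∈ N := by
    intro m f
    have h1 := hN m _ (hv (shiftOp (-m) f))
    have hexp : DF B 1 b m (v ⊗ₜ[ℂ] shiftOp (-m) f)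
        = v ⊗ₜ[ℂ] (DOp 1 b m (shiftOp (-m) f)) + (gOp B m v) ⊗ₜ[ℂ] f := by
      simp [DF, XOp, one_zpow, hshift]
    rw [hexp] at h1
    simpa using N.sub_mem h1 (hv (DOp 1 b m (shiftOp (-m) f)))
  intro i f
  set x : Fin (r+1) → ℂ := fun k => ((k : ℕ) : ℂ) + 1 with hx
  set A : Matrix (Fin (r+1)) (Fin (r+1)) ℂ := Matrix.diagonal x * Matrix.vandermonde x with hA
  have hxinj : Function.Injective x := by
    intro p q h
    simp only [hx, add_left_inj, Nat.cast_inj] at h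
    exact Fin.ext h
  have hdet : A.det ≠ 0 := by
    rw [hA, Matrix.det_mul, Matrix.det_diagonal]
    refine mul_ne_zero (Finset.prod_ne_zero_iff.mpr fun k _ => ?_)
      ((Matrix.det_vandermonde_ne_zero_iff).mpr hxinj)
    exact Nat.cast_add_one_ne_zero _
  have hAi : A⁻¹ * A = 1 := Matrix.nonsing_inv_mul A hdet.isUnit
  have hAentry : ∀ k j : Fin (r+1), A k j = x k ^ ((j:ℕ)+1) := by
    intro k j
    simp [hA, Matrix.diagonal_mul, Matrix.vandermonde, pow_succ, mul_comm]
  have hgOp : ∀ k : Fin (r+1), gOp B ((k:ℕ)+1) v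
      = ∑ j : Fin (r+1), (x k ^ ((j:ℕ)+1) / (Nat.factorial ((j:ℕ)+1) : ℂ)) • B.a j v := by
    intro k
    simp only [gOp, LinearMap.sum_apply, LinearMap.smul_apply]
    refine Finset.sum_congr rfl fun j _ => ?_
    congr 2
    push_cast
    rfl
  have key : B.a i v = ∑ k : Fin (r+1),
      ((Nat.factorial ((i:ℕ)+1) : ℂ) * (A⁻¹ i k)) • gOp B ((k:ℕ)+1) v := by
    have h2 : ∑ k : Fin (r+1), ((Nat.factorial ((i:ℕ)+1) : ℂ) * (A⁻¹ i k)) • gOp B ((k:ℕ)+1) v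
        = ∑ j : Fin (r+1), ((A⁻¹ * A) i j) •
            (((Nat.factorial ((i:ℕ)+1) : ℂ) / (Nat.factorial ((j:ℕ)+1) : ℂ)) • B.a j v) := by
      have h1 : ∀ k : Fin (r+1), ((Nat.factorial ((i:ℕ)+1) : ℂ) * (A⁻¹ i k)) • gOp B ((k:ℕ)+1) v
          = ∑ j : Fin (r+1), (A⁻¹ i k * A k j) •
              (((Nat.factorial ((i:ℕ)+1) : ℂ) / (Nat.factorial ((j:ℕ)+1) : ℂ)) • B.a j v) := by
        intro k
        rw [hgOp, Finset.smul_sum]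
        refine Finset.sum_congr rfl fun j _ => ?_
        rw [smul_smul, smul_smul, hAentry]
        congr 1
        have : ((Nat.factorial ((j:ℕ)+1) : ℂ)) ≠ 0 := Nat.cast_ne_zero.mpr (Nat.factorial_ne_zero _)
        field_simp
      calc ∑ k : Fin (r+1), ((Nat.factorial ((i:ℕ)+1) : ℂ) * (A⁻¹ i k)) • gOp B ((k:ℕ)+1) v
          = ∑ k : Fin (r+1), ∑ j : Fin (r+1), (A⁻¹ i k * A k j) •
              (((Nat.factorial ((i:ℕ)+1) : ℂ) / (Nat.factorial ((j:ℕ)+1) : ℂ)) • B.a j v) :=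
            Finset.sum_congr rfl fun k _ => h1 k
        _ = ∑ j : Fin (r+1), ∑ k : Fin (r+1), (A⁻¹ i k * A k j) •
              (((Nat.factorial ((i:ℕ)+1) : ℂ) / (Nat.factorial ((j:ℕ)+1) : ℂ)) • B.a j v) :=
            Finset.sum_comm
        _ = ∑ j : Fin (r+1), ((A⁻¹ * A) i j) •
              (((Nat.factorial ((i:ℕ)+1) : ℂ) / (Nat.factorial ((j:ℕ)+1) : ℂ)) • B.a j v) := by
            refine Finset.sum_congr rfl fun j _ => ?_
            rw [Matrix.mul_apply, Finset.sum_smul]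
    rw [h2, hAi]
    have : ((Nat.factorial ((i:ℕ)+1) : ℂ)) ≠ 0 := Nat.cast_ne_zero.mpr (Nat.factorial_ne_zero _)
    simp [Matrix.one_apply, ite_smul, div_self this]
  rw [key, TensorProduct.sum_tmul]
  exact N.sum_mem fun k _ => by
    rw [← TensorProduct.smul_tmul']
    exact N.smul_mem _ (hg _ f)
end

section
/- Let r ∈ ℕ, let (a_0, …, a_r) be irreducible 𝓑_r-data on a nonzero ℂ-vector space M, and let α, β ∈ ℂ. Then the Virasoro module F(M, A(α,β)) is reducible (i.e., there is a ℂ-subspace N of M ⊗ ℂ[x, x^{−1}] invariant under every D_m with N ≠ 0 and N ≠ M ⊗ ℂ[x, x^{−1}]) if and only if there exists γ ∈ ℂ such that M is one-dimensional with a_0 = γ·id_M and a_i = 0 for 1 ≤ i ≤ r, α ∈ ℤ, and β + γ ∈ {0, 1}. -/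
/-!
For a submodule `N` of `F(M, A(α,β))` let `N_n = {v | v ⊗ x^n ∈ N}`. Since `D_0` acts on
`M ⊗ x^n` by the scalar `n + α`, `N` is the sum of the `N_n ⊗ x^n`, and `D_m` maps `N_n` into
`N_{n+m}` by `v ↦ (n + α + βm) v + g(m) v`, a polynomial in `m` with operator coefficients.
Comparing coefficients shows that `Σ N_n` and `⋂ N_n` are invariant under the `a_i`, so for a
proper nonzero `N` they are `M` and `0`; hence an operator mapping every `N_n` into every `N_l`
vanishes. Composing two steps `N_n → N_{n+m} → N_l` gives a polynomial in `m` with values in the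
fixed `N_l`; if `a_i = 0` for `i > s` its top coefficient is, up to a unit, `a_s²` for `s ≥ 1`
and `(a_0 + β - 1)(a_0 + β)` for `s = 0`. So `a_s² = 0`, and as `ker a_s` is then invariant,
`a_s = 0`; downward induction leaves `a_0`, and irreducibility forces `a_0 + β ∈ {0, 1}` and
`dim M = 1`. Then `D_m (v ⊗ x^n) = (n + α + (β + γ) m) v ⊗ x^{n+m}`, from which `α ∈ ℤ` and the
converse are read off directly.
-/

open TensorProduct

/-- `IsFA B α β D` says that `D` is the family of operators of the Virasoro module
`F(M, A(α,β)) = M ⊗ ℂ[x,x⁻¹]`, i.e. `D_m(v ⊗ x^n) = ((n + α + βm)·v + g(m)v) ⊗ x^{n+m}`. -/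
def IsFA {r : ℕ} {M : Type*} [AddCommGroup M] [Module ℂ M] (B : BrData r M)
    (al be : ℂ) (D : ℤ → Module.End ℂ (M ⊗[ℂ] LaurentPolynomial ℂ)) : Prop :=
  ∀ (m n : ℤ) (v : M),
    D m (v ⊗ₜ[ℂ] LaurentPolynomial.T n)
      = ((((n : ℂ) + al + be * (m : ℂ)) • v + gOp B m v) ⊗ₜ[ℂ] LaurentPolynomial.T (n + m))

open Polynomial

theorem Submodule.mem_of_sum_mem_of_eigenvectors {K V ι : Type*} [Field K] [AddCommGroup V]
    [Module K V] {N : Submodule K V} {f : Module.End K V} (hN : ∀ x ∈ N, f x ∈ N)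
    {μ : ι → K} (hμ : Function.Injective μ) {s : Finset ι} {x : ι → V}
    (hx : ∀ i ∈ s, f (x i) = μ i • x i) (hsum : ∑ i ∈ s, x i ∈ N) {i : ι} (hi : i ∈ s) :
    x i ∈ N := by
  set fN : Module.End K (V ⧸ N) := N.mapQ N f hN
  have hindep := (iSupIndep_iff_finsetSum_eq_zero_imp_eq_zero _).mp
    (fN.eigenspaces_iSupIndep.comp hμ) s (fun j => N.mkQ (x j))
    (fun j hj => Module.End.mem_eigenspace_iff.mpr <| by simp [fN, hx j hj])
    (by rw [← map_sum]; exact (Submodule.Quotient.mk_eq_zero N).mpr hsum) i hi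
  exact (Submodule.Quotient.mk_eq_zero N).mp hindep

section

variable {r : ℕ} {M : Type*} [AddCommGroup M] [Module ℂ M]

noncomputable def evalSmulOne (z : ℂ) : (Module.End ℂ M)[X] →+* Module.End ℂ M :=
  eval₂RingHom' (RingHom.id _) (algebraMap ℂ _ z) fun A => Algebra.commute_algebraMap_right z A

@[simp]
theorem evalSmulOne_C (z : ℂ) (A : Module.End ℂ M) : evalSmulOne z (C A) = A :=
  eval₂_C _ _

@[simp]
theorem evalSmulOne_map (z : ℂ) (q : ℂ[X]) :
    evalSmulOne z (q.map (algebraMap ℂ (Module.End ℂ M))) = q.eval z • 1 := by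
  simp [evalSmulOne, eval₂_map, ← Algebra.algebraMap_eq_smul_one, eval₂_at_apply]

theorem evalSmulOne_apply (z : ℂ) (p : (Module.End ℂ M)[X]) (v : M) :
    evalSmulOne z p v = ∑ k ∈ Finset.range (p.natDegree + 1), z ^ k • p.coeff k v := by
  simp [evalSmulOne, eval₂_eq_sum_range, Algebra.algebraMap_eq_smul_one, _root_.smul_pow]

/-- A functional on `M ⧸ S` turns `m ↦ evalSmulOne m p v` into a scalar polynomial vanishing at
every integer. -/
theorem coeff_apply_mem_of_forall_evalSmulOne_mem {S : Submodule ℂ M}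
    {p : (Module.End ℂ M)[X]} {v : M} (h : ∀ m : ℤ, evalSmulOne (m : ℂ) p v ∈ S) (k : ℕ) :
    p.coeff k v ∈ S := by
  by_contra hk
  obtain ⟨φ, hφ⟩ : ∃ φ : Module.Dual ℂ (M ⧸ S), φ (S.mkQ (p.coeff k v)) ≠ 0 := by
    by_contra! hφ
    exact hk ((Submodule.Quotient.mk_eq_zero S).mp
      ((Module.forall_dual_apply_eq_zero_iff ℂ _).mp hφ))
  set q : ℂ[X] := ∑ j ∈ Finset.range (p.natDegree + 1), C (φ (S.mkQ (p.coeff j v))) * X ^ j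
  have hroots : Set.range ((↑) : ℤ → ℂ) ⊆ {z | q.IsRoot z} := by
    rintro _ ⟨m, rfl⟩
    have hm : φ (S.mkQ (evalSmulOne (m : ℂ) p v)) = 0 := by
      rw [Submodule.mkQ_apply, (Submodule.Quotient.mk_eq_zero S).mpr (h m), map_zero]
    rw [evalSmulOne_apply, map_sum, map_sum] at hm
    simp only [map_smul, smul_eq_mul] at hm
    simp only [Set.mem_ofPred_eq, IsRoot, q, eval_finsetSum, eval_mul, eval_C, eval_pow, eval_X]
    rw [← hm]
    exact Finset.sum_congr rfl fun j _ => mul_comm _ _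
  have hq : q = 0 :=
    eq_zero_of_infinite_isRoot q ((Set.infinite_range_of_injective Int.cast_injective).mono hroots)
  have hcoeff := congrArg (coeff · k) hq
  by_cases hkd : k ≤ p.natDegree
  · exact hφ (by simpa [q, finsetSum_coeff, Nat.lt_succ_of_le hkd] using hcoeff)
  · simp [coeff_eq_zero_of_natDegree_lt (not_le.mp hkd)] at hφ

noncomputable def gEnd (a : Fin (r + 1) → Module.End ℂ M) (z : ℂ) : Module.End ℂ M :=
  ∑ i : Fin (r + 1), ((z ^ ((i : ℕ) + 1)) / (Nat.factorial ((i : ℕ) + 1) : ℂ)) • a i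

theorem gOp_eq_gEnd (B : BrData r M) (m : ℤ) : gOp B m = gEnd B.a m := rfl

@[simp]
theorem gEnd_zero (a : Fin (r + 1) → Module.End ℂ M) : gEnd a 0 = 0 := by
  simp [gEnd]

theorem gEnd_add_single (a : Fin (r + 1) → Module.End ℂ M) (t z : ℂ) :
    gEnd (a + Pi.single 0 (t • 1)) z = gEnd a z + (z * t) • 1 := by
  simp [gEnd, smul_add, Finset.sum_add_distrib, Pi.single_apply, smul_smul]

noncomputable def gPoly (a : Fin (r + 1) → Module.End ℂ M) (c : ℂ) (q : ℂ[X]) :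
    (Module.End ℂ M)[X] :=
  C (c • 1) + ∑ i : Fin (r + 1),
    C ((Nat.factorial ((i : ℕ) + 1) : ℂ)⁻¹ • a i) * (q ^ ((i : ℕ) + 1)).map (algebraMap ℂ _)

theorem evalSmulOne_gPoly (a : Fin (r + 1) → Module.End ℂ M) (c z : ℂ) (q : ℂ[X]) :
    evalSmulOne z (gPoly a c q) = c • 1 + gEnd a (q.eval z) := by
  simp only [gPoly, map_add, map_sum, map_mul, evalSmulOne_C, evalSmulOne_map, gEnd,
    Polynomial.map_pow, map_pow]
  simp [div_eq_mul_inv, mul_smul, _root_.smul_pow]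

theorem gPoly_coeff_of_ne_zero (a : Fin (r + 1) → Module.End ℂ M) (c : ℂ) (q : ℂ[X]) {n : ℕ}
    (hn : n ≠ 0) : (gPoly a c q).coeff n = ∑ i : Fin (r + 1),
      ((q ^ ((i : ℕ) + 1)).coeff n * (Nat.factorial ((i : ℕ) + 1) : ℂ)⁻¹) • a i := by
  rw [gPoly, coeff_add, coeff_C, if_neg hn, zero_add, finsetSum_coeff]
  refine Finset.sum_congr rfl fun i _ => ?_
  rw [coeff_C_mul, coeff_map, ← Algebra.commutes, ← Algebra.smul_def, smul_smul]

theorem gPoly_X_coeff_succ (a : Fin (r + 1) → Module.End ℂ M) (c : ℂ) (i : Fin (r + 1)) :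
    (gPoly a c X).coeff ((i : ℕ) + 1) = (Nat.factorial ((i : ℕ) + 1) : ℂ)⁻¹ • a i := by
  rw [gPoly_coeff_of_ne_zero _ _ _ (Nat.succ_ne_zero _), Finset.sum_eq_single i]
  · simp
  · intro j _ hj
    simp [coeff_X_pow, Fin.val_ne_of_ne hj.symm]
  · simp

theorem natDegree_gPoly_le {a : Fin (r + 1) → Module.End ℂ M} {s : Fin (r + 1)}
    (hs : ∀ i, s < i → a i = 0) (c : ℂ) {q : ℂ[X]} (hq : q.natDegree ≤ 1) :
    (gPoly a c q).natDegree ≤ (s : ℕ) + 1 := by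
  refine natDegree_add_le_of_degree_le (by simp) (natDegree_sum_le_of_forall_le _ _ fun i _ => ?_)
  obtain hi | hi := le_or_gt i s
  · refine (natDegree_C_mul_le _ _).trans (natDegree_map_le.trans ?_)
    exact natDegree_pow_le_of_le _ hq |>.trans (by simpa using hi)
  · simp [hs i hi]

theorem gPoly_coeff_of_natDegree_le_one {a : Fin (r + 1) → Module.End ℂ M} {s : Fin (r + 1)}
    (hs : ∀ i, s < i → a i = 0) (c : ℂ) {q : ℂ[X]} (hq : q.natDegree ≤ 1) :
    (gPoly a c q).coeff ((s : ℕ) + 1) =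
      (q.coeff 1 ^ ((s : ℕ) + 1) * (Nat.factorial ((s : ℕ) + 1) : ℂ)⁻¹) • a s := by
  rw [gPoly_coeff_of_ne_zero _ _ _ (Nat.succ_ne_zero _), Finset.sum_eq_single s]
  · rw [← coeff_pow_of_natDegree_le hq, mul_one]
  · intro i _ hi
    obtain hlt | hlt := lt_or_gt_of_ne hi
    · rw [coeff_eq_zero_of_natDegree_lt, zero_mul, zero_smul]
      exact (natDegree_pow_le_of_le _ hq).trans_lt (by simpa using hlt)
    · simp [hs i hlt]
  · simp

namespace BrData

variable (B : BrData r M)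

def IsIrreducible : Prop :=
  ∀ N : Submodule ℂ M, (∀ i : Fin (r + 1), ∀ v ∈ N, B.a i v ∈ N) → N = ⊥ ∨ N = ⊤

/-- Replacing `a_0` by `a_0 + β` absorbs the term `β m` of `D_m` into `g(m)`. -/
def shiftedA (t : ℂ) : Fin (r + 1) → Module.End ℂ M := B.a + Pi.single 0 (t • 1)

theorem shiftedA_of_ne_zero (t : ℂ) {i : Fin (r + 1)} (hi : i ≠ 0) :
    B.shiftedA t i = B.a i := by
  simp [shiftedA, hi]

theorem apply_mem_of_forall_evalSmulOne_mem {S : Submodule ℂ M} {v : M} (hv : v ∈ S) {c e : ℂ}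
    (h : ∀ m : ℤ, evalSmulOne (m : ℂ) (gPoly (B.shiftedA e) c X) v ∈ S)
    (i : Fin (r + 1)) : B.a i v ∈ S := by
  have hshift : B.shiftedA e i v ∈ S := by
    have := coeff_apply_mem_of_forall_evalSmulOne_mem h ((i : ℕ) + 1)
    rwa [gPoly_X_coeff_succ, LinearMap.smul_apply,
      Submodule.smul_mem_iff _ (by simp [Nat.factorial_ne_zero])] at this
  have hsingle : (Pi.single 0 (e • 1) : Fin (r + 1) → Module.End ℂ M) i v ∈ S := by
    rcases eq_or_ne i 0 with rfl | hi
    · simpa using S.smul_mem e hv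
    · simp [hi]
  simpa [shiftedA] using S.sub_mem hshift hsingle

/-- `[a_i, a_s] = (s - i) a_{i+s}`, and `a_{i+s}` vanishes on `ker a_s`. -/
theorem apply_apply_eq_zero_of_forall_lt {s : Fin (r + 1)} (hs : ∀ i, s < i → B.a i = 0)
    (i : Fin (r + 1)) {v : M} (hv : B.a s v = 0) : B.a s (B.a i v) = 0 := by
  by_cases hsum : (i : ℕ) + s ≤ r
  · have hv' : B.a ⟨(i : ℕ) + s, Nat.lt_succ_of_le hsum⟩ v = 0 := by
      rcases Nat.eq_zero_or_pos (i : ℕ) with hi | hi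
      · simpa [hi] using hv
      · simp [hs _ (Fin.mk_lt_mk.mpr (by omega) : s < ⟨(i : ℕ) + s, _⟩)]
    simpa [hv, hv'] using congr($(B.rel i s hsum) v)
  · simpa [hv] using congr($(B.comm i s (by omega)) v).symm

namespace IsIrreducible

variable {B}

theorem ker_eq_bot_or_eq_zero (hB : B.IsIrreducible) {W : Module.End ℂ M}
    (hW : ∀ i v, W v = 0 → W (B.a i v) = 0) : LinearMap.ker W = ⊥ ∨ W = 0 :=
  (hB _ hW).imp_right LinearMap.ker_eq_top.mp

theorem eq_zero_of_mul_self_eq_zero (hB : B.IsIrreducible) {s : Fin (r + 1)}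
    (hs : ∀ i, s < i → B.a i = 0) (hsq : B.a s * B.a s = 0) : B.a s = 0 := by
  refine (hB.ker_eq_bot_or_eq_zero fun i _ => B.apply_apply_eq_zero_of_forall_lt hs i).elim
    (fun hker => ?_) id
  ext v
  exact LinearMap.ker_eq_bot'.mp hker _ congr($hsq v)

theorem exists_eq_smul_one (hB : B.IsIrreducible) (hz : ∀ i, i ≠ 0 → B.a i = 0) {t : ℂ}
    (h : (B.a 0 + (t - 1) • 1) * (B.a 0 + t • 1) = 0) :
    ∃ c : ℂ, B.a 0 = c • 1 ∧ (t + c = 0 ∨ t + c = 1) := by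
  set Y := B.a 0 + t • 1
  have hY : Y * (Y - 1) = 0 := by
    have hsub : B.a 0 + (t - 1) • 1 = Y - 1 := by
      simp only [Y, sub_smul, one_smul]
      abel
    rw [← ((Commute.refl Y).sub_left (Commute.one_left Y)).eq, ← hsub, h]
  have hker : ∀ i v, Y v = 0 → Y (B.a i v) = 0 := by
    intro i v hv
    rcases eq_or_ne i 0 with rfl | hi
    · simpa [Y, hv] using
        congr($(((Commute.refl (B.a 0)).add_right ((Commute.one_right _).smul_right t)).eq) v).symm
    · simp [hz i hi]
  rcases hB.ker_eq_bot_or_eq_zero hker with hY_inj | hY0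
  · refine ⟨1 - t, ?_, Or.inr (by ring)⟩
    have hY1 : Y - 1 = 0 := by
      ext v
      exact LinearMap.ker_eq_bot'.mp hY_inj _ congr($hY v)
    rw [sub_smul, one_smul]
    linear_combination (norm := module) hY1
  · refine ⟨-t, ?_, Or.inl (by ring)⟩
    linear_combination (norm := module) hY0

theorem isSimpleModule [Nontrivial M] (hB : B.IsIrreducible) {c : ℂ} (h0 : B.a 0 = c • 1)
    (hz : ∀ i, i ≠ 0 → B.a i = 0) : IsSimpleModule ℂ M where
  eq_bot_or_eq_top N := hB N fun i v hv => by
    rcases eq_or_ne i 0 with rfl | hi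
    · simpa [h0] using N.smul_mem c hv
    · simp [hz i hi]

end IsIrreducible

end BrData

/-- `D_m` on `M ⊗ x^n`, as an operator on `M`. -/
noncomputable def transOp (B : BrData r M) (α β : ℂ) (n m : ℤ) : Module.End ℂ M :=
  ((n : ℂ) + α + β * m) • 1 + gOp B m

theorem transOp_eq_evalSmulOne_gPoly (B : BrData r M) (α β : ℂ) (n m : ℤ) {e c z : ℂ}
    {q : ℂ[X]} (hq : q.eval z = m) (hc : n + α + (β - e) * m = c) :
    transOp B α β n m = evalSmulOne z (gPoly (B.shiftedA e) c q) := by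
  rw [evalSmulOne_gPoly, hq, BrData.shiftedA, gEnd_add_single, ← gOp_eq_gEnd, transOp, ← hc]
  module

theorem transOp_eq_smul_one {B : BrData r M} {c : ℂ} (h0 : B.a 0 = c • 1)
    (hz : ∀ i, i ≠ 0 → B.a i = 0) (α β : ℂ) (n m : ℤ) :
    transOp B α β n m = ((n : ℂ) + α + (β + c) * m) • 1 := by
  have hB : B.a = (0 : Fin (r + 1) → Module.End ℂ M) + Pi.single 0 (c • 1) := by
    ext1 i
    rcases eq_or_ne i 0 with rfl | hi
    · simp [h0]
    · simp [hz i hi, hi]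
  rw [transOp, gOp_eq_gEnd, hB, gEnd_add_single]
  simp only [gEnd, Pi.zero_apply, smul_zero, Finset.sum_const_zero, zero_add]
  module

/-- The property of the homogeneous components `N n = {v | v ⊗ x^n ∈ N}` of a submodule `N` of
`F(M, A(α,β))` that is invariant under every `D_m`. -/
def IsFAComponents (B : BrData r M) (α β : ℂ) (N : ℤ → Submodule ℂ M) : Prop :=
  ∀ n m : ℤ, ∀ v ∈ N n, transOp B α β n m v ∈ N (n + m)

namespace IsFAComponents

variable {B : BrData r M} {α β : ℂ} {N : ℤ → Submodule ℂ M}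

theorem apply_mem_iSup (hN : IsFAComponents B α β N) (i : Fin (r + 1)) {v : M}
    (hv : v ∈ ⨆ n, N n) : B.a i v ∈ ⨆ n, N n := by
  refine (iSup_le fun n v hv => Submodule.mem_comap.mpr ?_ :
    ⨆ n, N n ≤ (⨆ n, N n).comap (B.a i)) hv
  refine B.apply_mem_of_forall_evalSmulOne_mem (Submodule.mem_iSup_of_mem n hv) (e := β)
    (c := n + α) (fun m => ?_) i
  rw [← transOp_eq_evalSmulOne_gPoly B α β n m eval_X (by ring)]
  exact Submodule.mem_iSup_of_mem _ (hN n m v hv)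

theorem apply_mem_iInf (hN : IsFAComponents B α β N) (i : Fin (r + 1)) {v : M}
    (hv : v ∈ ⨅ n, N n) : B.a i v ∈ ⨅ n, N n := by
  rw [Submodule.mem_iInf] at hv ⊢
  intro l
  refine B.apply_mem_of_forall_evalSmulOne_mem (hv l) (e := β - 1) (c := l + α) (fun m => ?_) i
  rw [← transOp_eq_evalSmulOne_gPoly B α β (l - m) m eval_X (by push_cast; ring)]
  simpa using hN (l - m) m v (hv (l - m))

theorem iSup_eq_top (hN : IsFAComponents B α β N) (hB : B.IsIrreducible)
    (hbot : ∃ n, N n ≠ ⊥) : ⨆ n, N n = ⊤ :=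
  (hB _ hN.apply_mem_iSup).resolve_left fun h =>
    hbot.elim fun n hn => hn (eq_bot_iff.mpr (h ▸ le_iSup N n))

theorem iInf_eq_bot (hN : IsFAComponents B α β N) (hB : B.IsIrreducible)
    (htop : ∃ n, N n ≠ ⊤) : ⨅ n, N n = ⊥ :=
  (hB _ hN.apply_mem_iInf).resolve_right fun h =>
    htop.elim fun n hn => hn (eq_top_iff.mpr (h ▸ iInf_le N n))

theorem eq_zero_of_forall_mem (hN : IsFAComponents B α β N) (hB : B.IsIrreducible)
    (hbot : ∃ n, N n ≠ ⊥) (htop : ∃ n, N n ≠ ⊤) {W : Module.End ℂ M}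
    (hW : ∀ n l, ∀ v ∈ N n, W v ∈ N l) : W = 0 := by
  rw [← LinearMap.ker_eq_top, eq_top_iff, ← hN.iSup_eq_top hB hbot, iSup_le_iff]
  intro n v hv
  have : W v ∈ ⨅ l, N l := Submodule.mem_iInf _ |>.mpr fun l => hW n l v hv
  rwa [hN.iInf_eq_bot hB htop, Submodule.mem_bot] at this

/-- `N n → N (n + m) → N l` is a polynomial in `m` whose top coefficient is, up to a unit, the
product of the top coefficients of the two steps. -/
theorem shiftedA_mul_shiftedA_apply_mem (hN : IsFAComponents B α β N) {s : Fin (r + 1)}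
    (hs : ∀ i, s < i → B.a i = 0) (n l : ℤ) {v : M} (hv : v ∈ N n) :
    (B.shiftedA (β - 1) s * B.shiftedA β s) v ∈ N l := by
  set P := gPoly (B.shiftedA β) (n + α) X
  set Q := gPoly (B.shiftedA (β - 1)) (l + α) (C ((l - n : ℤ) : ℂ) - X)
  have hvan (t : ℂ) (i) (hi : s < i) : B.shiftedA t i = 0 := by
    rw [B.shiftedA_of_ne_zero t (Fin.ne_zero_of_lt hi), hs i hi]
  have hdeg : (C ((l - n : ℤ) : ℂ) - X).natDegree ≤ 1 := by compute_degree!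
  have hcoeff : (C ((l - n : ℤ) : ℂ) - X).coeff 1 = -1 := by
    rw [coeff_sub, coeff_C_succ, coeff_X_one, zero_sub]
  have hQP : ∀ m : ℤ, evalSmulOne (m : ℂ) (Q * P) v ∈ N l := by
    intro m
    rw [map_mul, Module.End.mul_apply, ← transOp_eq_evalSmulOne_gPoly B α β n m eval_X (by ring),
      ← transOp_eq_evalSmulOne_gPoly B α β (n + m) (l - n - m) (by simp) (by push_cast; ring)]
    simpa using hN (n + m) (l - n - m) _ (hN n m v hv)
  have := coeff_apply_mem_of_forall_evalSmulOne_mem hQP (((s : ℕ) + 1) + ((s : ℕ) + 1))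
  rwa [coeff_mul_add_eq_of_natDegree_le (natDegree_gPoly_le (hvan _) _ hdeg)
      (natDegree_gPoly_le (hvan _) _ natDegree_X_le),
    gPoly_coeff_of_natDegree_le_one (hvan _) _ hdeg,
    gPoly_coeff_of_natDegree_le_one (hvan _) _ natDegree_X_le, hcoeff, smul_mul_smul_comm,
    LinearMap.smul_apply, Submodule.smul_mem_iff _ (by simp [Nat.factorial_ne_zero])] at this

theorem a_eq_zero_of_ne_zero (hN : IsFAComponents B α β N) (hB : B.IsIrreducible)
    (hbot : ∃ n, N n ≠ ⊥) (htop : ∃ n, N n ≠ ⊤) (i : Fin (r + 1)) (hi : i ≠ 0) :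
    B.a i = 0 := by
  induction i using WellFoundedGT.induction with
  | _ s ih =>
    have hs : ∀ i, s < i → B.a i = 0 := fun i hsi => ih i hsi (Fin.ne_zero_of_lt hsi)
    refine hB.eq_zero_of_mul_self_eq_zero hs (hN.eq_zero_of_forall_mem hB hbot htop ?_)
    intro n l v hv
    simpa [B.shiftedA_of_ne_zero _ hi] using hN.shiftedA_mul_shiftedA_apply_mem hs n l hv

theorem exists_a_zero_eq_smul_one (hN : IsFAComponents B α β N) (hB : B.IsIrreducible)
    (hbot : ∃ n, N n ≠ ⊥) (htop : ∃ n, N n ≠ ⊤) :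
    ∃ c : ℂ, B.a 0 = c • 1 ∧ (β + c = 0 ∨ β + c = 1) := by
  have hz := hN.a_eq_zero_of_ne_zero hB hbot htop
  refine hB.exists_eq_smul_one hz (hN.eq_zero_of_forall_mem hB hbot htop fun n l v hv => ?_)
  simpa [BrData.shiftedA] using
    hN.shiftedA_mul_shiftedA_apply_mem (s := 0) (fun i hi => hz i (Fin.ne_zero_of_lt hi)) n l hv

theorem exists_int_eq [IsSimpleModule ℂ M] (hN : IsFAComponents B α β N) {c : ℂ}
    (h0 : B.a 0 = c • 1) (hz : ∀ i, i ≠ 0 → B.a i = 0) (hc : β + c = 0 ∨ β + c = 1)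
    (hbot : ∃ n, N n ≠ ⊥) (htop : ∃ n, N n ≠ ⊤) : ∃ k : ℤ, α = k := by
  obtain ⟨n₁, hn₁⟩ := hbot
  obtain ⟨n₀, hn₀⟩ := htop
  obtain ⟨v, hv, hv0⟩ := (Submodule.ne_bot_iff _).mp hn₁
  have hmem := hN n₁ (n₀ - n₁) v hv
  rw [add_sub_cancel, (IsSimpleOrder.eq_bot_or_eq_top (N n₀)).resolve_right hn₀,
    Submodule.mem_bot, transOp_eq_smul_one h0 hz, LinearMap.smul_apply, Module.End.one_apply,
    smul_eq_zero_iff_left hv0] at hmem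
  rcases hc with hc | hc
  · exact ⟨-n₁, by rw [hc] at hmem; push_cast; linear_combination hmem⟩
  · exact ⟨-n₀, by rw [hc] at hmem; push_cast at hmem ⊢; linear_combination hmem⟩

theorem exists_scalar [Nontrivial M] (hN : IsFAComponents B α β N) (hB : B.IsIrreducible)
    (hbot : ∃ n, N n ≠ ⊥) (htop : ∃ n, N n ≠ ⊤) :
    ∃ c : ℂ, Module.finrank ℂ M = 1 ∧ B.a 0 = c • 1 ∧ (∀ i, i ≠ 0 → B.a i = 0) ∧
      (∃ k : ℤ, α = k) ∧ (β + c = 0 ∨ β + c = 1) := by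
  have hz := hN.a_eq_zero_of_ne_zero hB hbot htop
  obtain ⟨c, h0, hc⟩ := hN.exists_a_zero_eq_smul_one hB hbot htop
  have := hB.isSimpleModule h0 hz
  exact ⟨c, isSimpleModule_iff_finrank_eq_one.mp this, h0, hz,
    hN.exists_int_eq h0 hz hc hbot htop, hc⟩

end IsFAComponents

section LaurentTensor

open LaurentPolynomial

noncomputable def laurentTensorEquiv : (M ⊗[ℂ] LaurentPolynomial ℂ) ≃ₗ[ℂ] (ℤ →₀ M) :=
  LinearEquiv.lTensor M (AddMonoidAlgebra.coeffLinearEquiv ℂ) ≪≫ₗ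
    TensorProduct.finsuppScalarRight ℂ ℂ M ℤ

@[simp]
theorem laurentTensorEquiv_symm_single (v : M) (n : ℤ) :
    laurentTensorEquiv.symm (Finsupp.single n v) = v ⊗ₜ[ℂ] T n := by
  simp [laurentTensorEquiv, TensorProduct.finsuppScalarRight_symm_apply_single]

@[simp]
theorem laurentTensorEquiv_tmul_T (v : M) (n : ℤ) :
    laurentTensorEquiv (v ⊗ₜ[ℂ] T n) = Finsupp.single n v := by
  rw [← laurentTensorEquiv_symm_single, LinearEquiv.apply_symm_apply]

theorem sum_tmul_T_laurentTensorEquiv (u : M ⊗[ℂ] LaurentPolynomial ℂ) :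
    ∑ n ∈ (laurentTensorEquiv u).support, laurentTensorEquiv u n ⊗ₜ[ℂ] T n = u :=
  laurentTensorEquiv.injective <| by
    simp only [map_sum, laurentTensorEquiv_tmul_T]
    exact Finsupp.sum_single _

theorem tmul_T_ne_zero {v : M} (hv : v ≠ 0) (n : ℤ) :
    v ⊗ₜ[ℂ] (T n : LaurentPolynomial ℂ) ≠ 0 := by
  intro h
  simpa [hv] using congr(laurentTensorEquiv $h)

theorem laurentTensor_ext {P : Type*} [AddCommGroup P] [Module ℂ P]
    {f g : (M ⊗[ℂ] LaurentPolynomial ℂ) →ₗ[ℂ] P} (h : ∀ v n, f (v ⊗ₜ T n) = g (v ⊗ₜ T n)) :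
    f = g := by
  have : f ∘ₗ laurentTensorEquiv.symm.toLinearMap = g ∘ₗ laurentTensorEquiv.symm.toLinearMap :=
    Finsupp.lhom_ext fun n v => by simpa using h v n
  refine LinearMap.ext fun u => ?_
  simpa using congr($this (laurentTensorEquiv u))

noncomputable def component (N : Submodule ℂ (M ⊗[ℂ] LaurentPolynomial ℂ)) (n : ℤ) :
    Submodule ℂ M :=
  N.comap ((TensorProduct.mk ℂ M (LaurentPolynomial ℂ)).flip (T n))

variable {N : Submodule ℂ (M ⊗[ℂ] LaurentPolynomial ℂ)}

theorem mem_component {n : ℤ} {v : M} : v ∈ component N n ↔ v ⊗ₜ T n ∈ N :=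
  Iff.rfl

theorem laurentTensorEquiv_apply_mem_component {f : Module.End ℂ (M ⊗[ℂ] LaurentPolynomial ℂ)}
    {μ : ℤ → ℂ} (hμ : Function.Injective μ) (hf : ∀ v n, f (v ⊗ₜ T n) = μ n • v ⊗ₜ T n)
    (hN : ∀ u ∈ N, f u ∈ N) {u : M ⊗[ℂ] LaurentPolynomial ℂ} (hu : u ∈ N) (n : ℤ) :
    laurentTensorEquiv u n ∈ component N n := by
  by_cases hn : n ∈ (laurentTensorEquiv u).support
  · refine Submodule.mem_of_sum_mem_of_eigenvectors hN hμ (fun i _ => hf _ i) ?_ hn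
    rwa [sum_tmul_T_laurentTensorEquiv]
  · rw [Finsupp.notMem_support_iff.mp hn]
    exact zero_mem _

theorem exists_component_ne_bot {f : Module.End ℂ (M ⊗[ℂ] LaurentPolynomial ℂ)}
    {μ : ℤ → ℂ} (hμ : Function.Injective μ) (hf : ∀ v n, f (v ⊗ₜ T n) = μ n • v ⊗ₜ T n)
    (hN : ∀ u ∈ N, f u ∈ N) (hbot : N ≠ ⊥) : ∃ n, component N n ≠ ⊥ := by
  obtain ⟨u, hu, hu0⟩ := (Submodule.ne_bot_iff N).mp hbot
  obtain ⟨n, hn⟩ : ∃ n, laurentTensorEquiv u n ≠ 0 := by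
    by_contra! h
    exact hu0 (laurentTensorEquiv.map_eq_zero_iff.mp (Finsupp.ext h))
  exact ⟨n, (Submodule.ne_bot_iff _).mpr
    ⟨_, laurentTensorEquiv_apply_mem_component hμ hf hN hu n, hn⟩⟩

theorem exists_component_ne_top (htop : N ≠ ⊤) : ∃ n, component N n ≠ ⊤ := by
  by_contra! h
  refine htop (eq_top_iff.mpr fun u _ => ?_)
  rw [← sum_tmul_T_laurentTensorEquiv u]
  exact Submodule.sum_mem _ fun n _ => mem_component.mp (h n ▸ Submodule.mem_top)

end LaurentTensor

namespace IsFA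

open LaurentPolynomial

variable {B : BrData r M} {α β : ℂ} {D : ℤ → Module.End ℂ (M ⊗[ℂ] LaurentPolynomial ℂ)}

theorem apply_tmul_T (hD : IsFA B α β D) (m n : ℤ) (v : M) :
    D m (v ⊗ₜ T n) = transOp B α β n m v ⊗ₜ T (n + m) := by
  simp [hD m n v, transOp]

theorem zero_apply_tmul_T (hD : IsFA B α β D) (v : M) (n : ℤ) :
    D 0 (v ⊗ₜ T n) = ((n : ℂ) + α) • v ⊗ₜ T n := by
  simp [hD 0 n v, gOp_eq_gEnd, TensorProduct.smul_tmul']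

theorem isFAComponents_component (hD : IsFA B α β D)
    {N : Submodule ℂ (M ⊗[ℂ] LaurentPolynomial ℂ)} (hN : ∀ m, ∀ u ∈ N, D m u ∈ N) :
    IsFAComponents B α β (component N) := fun n m v hv =>
  mem_component.mpr (hD.apply_tmul_T m n v ▸ hN m _ hv)

variable [Nontrivial M] {c : ℂ} {k : ℤ}

/-- For `β + c = 0` every `D_m` kills `M ⊗ x^{-k}`. -/
theorem exists_invariant_of_add_eq_zero (hD : IsFA B k β D) (h0 : B.a 0 = c • 1)
    (hz : ∀ i, i ≠ 0 → B.a i = 0) (hc : β + c = 0) :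
    ∃ N : Submodule ℂ (M ⊗[ℂ] LaurentPolynomial ℂ),
      (∀ m : ℤ, ∀ u ∈ N, D m u ∈ N) ∧ N ≠ ⊥ ∧ N ≠ ⊤ := by
  obtain ⟨v₀, hv₀⟩ := exists_ne (0 : M)
  refine ⟨LinearMap.range ((TensorProduct.mk ℂ M _).flip (T (-k))), ?_, ?_, ?_⟩
  · rintro m _ ⟨v, rfl⟩
    have : transOp B k β (-k) m v = 0 := by simp [transOp_eq_smul_one h0 hz, hc]
    simp [hD.apply_tmul_T, this]
  · exact (Submodule.ne_bot_iff _).mpr ⟨_, ⟨v₀, rfl⟩, tmul_T_ne_zero hv₀ (-k)⟩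
  · intro htop
    obtain ⟨v, hv⟩ := htop.ge (Submodule.mem_top (x := v₀ ⊗ₜ[ℂ] T (-k + 1)))
    exact hv₀ (by simpa using congr(laurentTensorEquiv $hv (-k + 1)) : (0 : M) = v₀).symm

/-- For `β + c = 1` no `D_m` reaches `M ⊗ x^{-k}`. -/
theorem exists_invariant_of_add_eq_one (hD : IsFA B k β D) (h0 : B.a 0 = c • 1)
    (hz : ∀ i, i ≠ 0 → B.a i = 0) (hc : β + c = 1) :
    ∃ N : Submodule ℂ (M ⊗[ℂ] LaurentPolynomial ℂ),
      (∀ m : ℤ, ∀ u ∈ N, D m u ∈ N) ∧ N ≠ ⊥ ∧ N ≠ ⊤ := by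
  obtain ⟨v₀, hv₀⟩ := exists_ne (0 : M)
  set π : (M ⊗[ℂ] LaurentPolynomial ℂ) →ₗ[ℂ] M :=
    Finsupp.lapply (-k) ∘ₗ laurentTensorEquiv.toLinearMap
  have hπ (v : M) (n : ℤ) : π (v ⊗ₜ T n) = if n = -k then v else 0 := by
    simp [π, Finsupp.single_apply]
  refine ⟨LinearMap.ker π, fun m u _ => ?_, ?_, ?_⟩
  · have : π ∘ₗ D m = 0 := laurentTensor_ext fun v n => by
      rw [LinearMap.comp_apply, hD.apply_tmul_T, hπ, transOp_eq_smul_one h0 hz, hc]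
      split_ifs with h
      · simp [show (n : ℂ) + k + m = 0 by exact_mod_cast (by omega : n + k + m = 0)]
      · simp
    exact congr($this u)
  · refine (Submodule.ne_bot_iff _).mpr ⟨v₀ ⊗ₜ T (-k + 1), ?_, tmul_T_ne_zero hv₀ _⟩
    simp [hπ]
  · intro htop
    have := htop.ge (Submodule.mem_top (x := v₀ ⊗ₜ[ℂ] T (-k)))
    simp [hπ, hv₀] at this

end IsFA

end

/-- for irreducible `𝓑_r`-data on a nonzero space `M`, the Virasoro module
`F(M, A(α,β))` is reducible if and only if there is `γ ∈ ℂ` such that `M` is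
one-dimensional with `a_0 = γ·id`, `a_i = 0` for `1 ≤ i ≤ r`, `α ∈ ℤ` and `β + γ ∈ {0,1}`. -/
theorem F_A_reducible_iff {r : ℕ} {M : Type*} [AddCommGroup M] [Module ℂ M]
    [Nontrivial M] (B : BrData r M)
    (hirr : ∀ N : Submodule ℂ M, (∀ i : Fin (r + 1), ∀ v ∈ N, B.a i v ∈ N) → N = ⊥ ∨ N = ⊤)
    (al be : ℂ) (D : ℤ → Module.End ℂ (M ⊗[ℂ] LaurentPolynomial ℂ))
    (hD : IsFA B al be D) :
    (∃ N : Submodule ℂ (M ⊗[ℂ] LaurentPolynomial ℂ),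
        (∀ m : ℤ, ∀ u ∈ N, D m u ∈ N) ∧ N ≠ ⊥ ∧ N ≠ ⊤)
      ↔ ∃ c : ℂ,
          Module.finrank ℂ M = 1 ∧ B.a 0 = c • (1 : Module.End ℂ M) ∧
          (∀ i : Fin (r + 1), (i : ℕ) ≠ 0 → B.a i = 0) ∧
          (∃ k : ℤ, al = (k : ℂ)) ∧ (be + c = 0 ∨ be + c = 1) := by
  constructor
  · rintro ⟨N, hN, hbot, htop⟩
    have hμ : Function.Injective fun n : ℤ => (n : ℂ) + al :=
      fun _ _ h => Int.cast_injective (add_right_cancel h)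
    obtain ⟨c, hrank, h0, hz, hk, hc⟩ := (hD.isFAComponents_component hN).exists_scalar hirr
      (exists_component_ne_bot hμ hD.zero_apply_tmul_T (hN 0) hbot) (exists_component_ne_top htop)
    exact ⟨c, hrank, h0, fun i hi => hz i (Fin.val_ne_zero_iff.mp hi), hk, hc⟩
  · rintro ⟨c, -, h0, hz, ⟨k, rfl⟩, hc⟩
    have hz' : ∀ i, i ≠ 0 → B.a i = 0 := fun i hi => hz i (Fin.val_ne_zero_iff.mpr hi)
    exact hc.elim (hD.exists_invariant_of_add_eq_zero h0 hz')
      (hD.exists_invariant_of_add_eq_one h0 hz')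
end
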